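/- arXiv:1602.00220 — 7 statements merged into one kernel-verified Lean document; each statement's English description precedes it below -/
import Mathlib

section
/- Let f : ℝ^d → ℝ be bounded below with infimum f̲, let α > 0, N ∈ ℕ, k > 0, and let L_k be a Lipschitz constant of f on the closed ball B_k = {x ∈ ℝ^d : |x| ≤ k}. Then for all X = (X¹,…,X^N), X̂ = (X̂¹,…,X̂^N) ∈ (ℝ^d)^N with |X| ≤ k and |X̂| ≤ k (Euclidean norm on (ℝ^d)^N) and every i ∈ {1,…,N}, the drift components satisfy |F_N^i(X) − F_N^i(X̂)| ≤ |X^i − X̂^i| + (1 + (2 c_k / N)·√(N|X̂^i|² + |X̂|²))·|X − X̂|, where c_k = α L_k exp(α · sup_{x∈B_k}(f(x) − f̲)). -/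
open Finset

/-- The weight-averaged drift component `F_N^i(X)` of the consensus-based
optimization particle system, with weight `ω(x) = exp(-α f x)`. -/
noncomputable def driftFN {d N : ℕ} (α : ℝ) (f : EuclideanSpace ℝ (Fin d) → ℝ)
    (X : Fin N → EuclideanSpace ℝ (Fin d)) (i : Fin N) : EuclideanSpace ℝ (Fin d) :=
  (∑ j, Real.exp (-α * f (X j)))⁻¹ •
    ∑ j ∈ Finset.univ.erase i, Real.exp (-α * f (X j)) • (X i - X j)

/-- The Euclidean norm of `X = (X^1, …, X^N) ∈ (ℝ^d)^N`. -/
noncomputable def prodNorm {d N : ℕ} (X : Fin N → EuclideanSpace ℝ (Fin d)) : ℝ :=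
  Real.sqrt (∑ j, ‖X j‖ ^ 2)

/-
Writing `p = softmax (-α f ∘ X)` for the normalized weights, `F^i(X) = X^i - ∑ⱼ pⱼ Xʲ`, so
`F^i(X) - F^i(X̂)` splits into `X^i - X̂^i`, a convex combination of the `Xʲ - X̂ʲ`, and
`∑ⱼ (pⱼ - p̂ⱼ) X̂ʲ`. For the last term, `pⱼ - p̂ⱼ = ∑ₗ (pⱼ p̂ₗ - p̂ⱼ pₗ)`, and each summand is a
difference of two exponentials, controlled by the Hermite–Hadamard inequality
`|eᵃ - eᵇ| ≤ |a - b| (eᵃ + eᵇ) / 2`: the exponent gap is a sum of two Lipschitz increments of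
`α f`, and `(eᵃ + eᵇ) / 2` is again a sum of products of weights, so the normalization is not
lost (a plain mean value bound would cost a second factor `exp (α sup (f - f̲))`). On the ball
every weight is at most `exp (α sup (f - f̲)) / N`, and Cauchy–Schwarz gives the factor
`2 c_k / N` in front of `|X̂| ≤ √(N |X̂^i|² + |X̂|²)`.
-/

open Real Metric

lemma exp_sub_one_le_mul_one_add_exp {t : ℝ} (ht : 0 ≤ t) :
    exp t - 1 ≤ t * (1 + exp t) / 2 := by
  let g : ℝ → ℝ := fun s => s * (1 + exp s) / 2 - (exp s - 1)
  have hg : ∀ s, HasDerivAt g ((1 - exp s * (1 - s)) / 2) s := fun s =>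
    ((((hasDerivAt_id s).mul ((hasDerivAt_exp s).const_add 1)).div_const 2).sub
      ((hasDerivAt_exp s).sub_const 1)).congr_deriv (by simp only [id]; ring)
  have hmono : Monotone g := monotone_of_deriv_nonneg (fun s => (hg s).differentiableAt)
    fun s => by
      have : exp s * (1 - s) ≤ 1 :=
        calc exp s * (1 - s) ≤ exp s * exp (-s) := by gcongr; linarith [add_one_le_exp (-s)]
          _ = 1 := by rw [← exp_add, add_neg_cancel, exp_zero]
      rw [(hg s).deriv]
      linarith
  have := hmono ht
  simp only [g, zero_mul, zero_div, exp_zero, sub_self] at this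
  linarith

/-- The Hermite–Hadamard inequality for `exp`: the logarithmic mean of `eᵃ` and `eᵇ` is at most
their arithmetic mean. -/
lemma abs_exp_sub_exp_le (a b : ℝ) : |exp a - exp b| ≤ |a - b| * (exp a + exp b) / 2 := by
  wlog hba : b ≤ a with H
  · rw [abs_sub_comm, abs_sub_comm a, add_comm]
    exact H b a (le_of_not_ge hba)
  have key := mul_le_mul_of_nonneg_left (exp_sub_one_le_mul_one_add_exp (sub_nonneg.2 hba))
    (exp_pos b).le
  have hab : exp a = exp b * exp (a - b) := by rw [← exp_add, add_sub_cancel]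
  rw [abs_of_nonneg (sub_nonneg.2 (exp_le_exp.2 hba)), abs_of_nonneg (sub_nonneg.2 hba), hab]
  linarith

lemma norm_le_sqrt_sum_sq {ι E : Type*} [Fintype ι] [SeminormedAddCommGroup E] (z : ι → E)
    (j : ι) : ‖z j‖ ≤ √(∑ l, ‖z l‖ ^ 2) :=
  le_sqrt_of_sq_le (single_le_sum (f := fun l => ‖z l‖ ^ 2) (fun _ _ => sq_nonneg _) (mem_univ j))

lemma sum_mul_le_sqrt_mul_sqrt_of_le {ι : Type*} [Fintype ι] {p : ι → ℝ} {r : ℝ}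
    (hp : ∀ j, 0 ≤ p j) (hp_sum : ∑ j, p j = 1) (hpr : ∀ j, p j ≤ r) (n : ι → ℝ) :
    ∑ j, p j * n j ≤ √r * √(∑ j, n j ^ 2) := by
  have hsq : ∑ j, p j ^ 2 ≤ r :=
    calc ∑ j, p j ^ 2 ≤ ∑ j, r * p j := sum_le_sum fun j _ => by
          rw [sq]; exact mul_le_mul_of_nonneg_right (hpr j) (hp j)
      _ = r := by rw [← mul_sum, hp_sum, mul_one]
  exact (sum_mul_le_sqrt_mul_sqrt _ p n).trans (by gcongr)

section Softmax

variable {ι : Type*} [Fintype ι]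

noncomputable def softmax (φ : ι → ℝ) (j : ι) : ℝ := exp (φ j) / ∑ l, exp (φ l)

lemma sum_exp_pos [Nonempty ι] (φ : ι → ℝ) : 0 < ∑ l, exp (φ l) :=
  sum_pos (fun _ _ => exp_pos _) univ_nonempty

lemma softmax_pos (φ : ι → ℝ) (j : ι) : 0 < softmax φ j :=
  have : Nonempty ι := ⟨j⟩
  div_pos (exp_pos _) (sum_exp_pos φ)

lemma sum_softmax [Nonempty ι] (φ : ι → ℝ) : ∑ j, softmax φ j = 1 := by
  simp only [softmax, ← sum_div, div_self (sum_exp_pos φ).ne']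

lemma softmax_le_exp_div_card {φ : ι → ℝ} {a t : ℝ} (hlo : ∀ l, a ≤ φ l)
    (hhi : ∀ l, φ l ≤ a + t) (j : ι) : softmax φ j ≤ exp t / Fintype.card ι := by
  have : Nonempty ι := ⟨j⟩
  have hsum : Fintype.card ι * exp a ≤ ∑ l, exp (φ l) := by
    simpa using sum_le_sum fun l (_ : l ∈ univ) => exp_le_exp.2 (hlo l)
  rw [softmax, div_le_div_iff₀ (sum_exp_pos φ) (by exact_mod_cast Fintype.card_pos)]
  calc exp (φ j) * Fintype.card ι ≤ exp t * (Fintype.card ι * exp a) := by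
        rw [mul_left_comm, ← exp_add, add_comm t, mul_comm]; gcongr; exact hhi j
    _ ≤ exp t * ∑ l, exp (φ l) := by gcongr

lemma softmax_neg_mul_le_exp_div_card {g : ι → ℝ} {α m M : ℝ} (hα : 0 ≤ α)
    (hlo : ∀ l, m ≤ g l) (hhi : ∀ l, g l - m ≤ M) (j : ι) :
    softmax (fun l => -α * g l) j ≤ exp (α * M) / Fintype.card ι :=
  softmax_le_exp_div_card (a := -α * (m + M)) (fun l => by nlinarith [hhi l])
    (fun l => by nlinarith [hlo l]) j

lemma softmax_sub_softmax [Nonempty ι] (φ ψ : ι → ℝ) (j : ι) :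
    softmax φ j - softmax ψ j = ∑ l, (softmax φ j * softmax ψ l - softmax ψ j * softmax φ l) := by
  rw [sum_sub_distrib, ← mul_sum, ← mul_sum, sum_softmax, sum_softmax, mul_one, mul_one]

lemma abs_softmax_mul_sub_le (φ ψ : ι → ℝ) (j l : ι) :
    |softmax φ j * softmax ψ l - softmax ψ j * softmax φ l| ≤
      |(φ j - ψ j) - (φ l - ψ l)|
        * (softmax φ j * softmax ψ l + softmax ψ j * softmax φ l) / 2 := by
  have : Nonempty ι := ⟨j⟩
  set c := ((∑ l, exp (φ l)) * ∑ l, exp (ψ l))⁻¹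
  have hc : 0 < c := inv_pos.2 (mul_pos (sum_exp_pos φ) (sum_exp_pos ψ))
  have hφψ : softmax φ j * softmax ψ l = c * exp (φ j + ψ l) := by
    rw [softmax, softmax, div_mul_div_comm, exp_add, div_eq_inv_mul]
  have hψφ : softmax ψ j * softmax φ l = c * exp (ψ j + φ l) := by
    rw [softmax, softmax, div_mul_div_comm, exp_add, div_eq_inv_mul, mul_comm (∑ l, exp (ψ l))]
  have hgap : (φ j - ψ j) - (φ l - ψ l) = (φ j + ψ l) - (ψ j + φ l) := by ring
  rw [hφψ, hψφ, ← mul_sub, ← mul_add, abs_mul, abs_of_pos hc, hgap]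
  calc c * |exp (φ j + ψ l) - exp (ψ j + φ l)|
      ≤ c * (|(φ j + ψ l) - (ψ j + φ l)| * (exp (φ j + ψ l) + exp (ψ j + φ l)) / 2) := by
        gcongr; exact abs_exp_sub_exp_le _ _
    _ = _ := by ring

lemma abs_softmax_sub_softmax_le [Nonempty ι] {φ ψ g : ι → ℝ} (hg : ∀ j, |φ j - ψ j| ≤ g j)
    (j : ι) :
    |softmax φ j - softmax ψ j| ≤ (g j * (softmax φ j + softmax ψ j)
      + softmax ψ j * ∑ l, g l * softmax φ l + softmax φ j * ∑ l, g l * softmax ψ l) / 2 := by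
  set p := softmax φ
  set p' := softmax ψ
  have hexpand : ∀ l, (g j + g l) * (p j * p' l + p' j * p l) / 2
      = (g j * p j * p' l + g j * p' j * p l + p' j * (g l * p l) + p j * (g l * p' l)) / 2 :=
    fun l => by ring
  rw [softmax_sub_softmax]
  calc |∑ l, (p j * p' l - p' j * p l)| ≤ ∑ l, |p j * p' l - p' j * p l| := abs_sum_le_sum_abs _ _
    _ ≤ ∑ l, (g j + g l) * (p j * p' l + p' j * p l) / 2 := sum_le_sum fun l _ => by
        refine (abs_softmax_mul_sub_le φ ψ j l).trans ?_
        have := (softmax_pos φ j).le; have := (softmax_pos ψ l).le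
        have := (softmax_pos ψ j).le; have := (softmax_pos φ l).le
        gcongr
        exact (abs_sub _ _).trans (add_le_add (hg j) (hg l))
    _ = _ := by
        simp only [hexpand, ← sum_div, sum_add_distrib, ← mul_sum, p, p', sum_softmax]
        ring

variable {E : Type*} [SeminormedAddCommGroup E] [NormedSpace ℝ E]

lemma norm_sum_softmax_sub_smul_le [Nonempty ι] {φ ψ g : ι → ℝ} {r : ℝ}
    (hφ : ∀ j, softmax φ j ≤ r) (hψ : ∀ j, softmax ψ j ≤ r) (hg : ∀ j, |φ j - ψ j| ≤ g j)
    (y : ι → E) :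
    ‖∑ j, (softmax φ j - softmax ψ j) • y j‖ ≤ 2 * r * √(∑ j, g j ^ 2) * √(∑ j, ‖y j‖ ^ 2) := by
  set p := softmax φ
  set p' := softmax ψ
  set G := √(∑ j, g j ^ 2)
  set Y := √(∑ j, ‖y j‖ ^ 2)
  obtain ⟨j₀⟩ := ‹Nonempty ι›
  have hr : 0 ≤ r := (softmax_pos φ j₀).le.trans (hφ j₀)
  have hg₀ : ∀ j, 0 ≤ g j := fun j => (abs_nonneg _).trans (hg j)
  have hp : ∀ j, 0 ≤ p j := fun j => (softmax_pos φ j).le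
  have hp' : ∀ j, 0 ≤ p' j := fun j => (softmax_pos ψ j).le
  have hgp : ∑ l, g l * p l ≤ √r * G := by
    simpa only [mul_comm] using sum_mul_le_sqrt_mul_sqrt_of_le hp (sum_softmax φ) hφ g
  have hgp' : ∑ l, g l * p' l ≤ √r * G := by
    simpa only [mul_comm] using sum_mul_le_sqrt_mul_sqrt_of_le hp' (sum_softmax ψ) hψ g
  have hpy : ∑ j, p j * ‖y j‖ ≤ √r * Y :=
    sum_mul_le_sqrt_mul_sqrt_of_le hp (sum_softmax φ) hφ _
  have hp'y : ∑ j, p' j * ‖y j‖ ≤ √r * Y :=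
    sum_mul_le_sqrt_mul_sqrt_of_le hp' (sum_softmax ψ) hψ _
  have hgy : ∑ j, g j * ‖y j‖ * (p j + p' j) ≤ 2 * r * (G * Y) :=
    calc ∑ j, g j * ‖y j‖ * (p j + p' j) ≤ ∑ j, g j * ‖y j‖ * (2 * r) :=
          sum_le_sum fun j _ => mul_le_mul_of_nonneg_left (by linarith [hφ j, hψ j])
            (mul_nonneg (hg₀ j) (norm_nonneg _))
      _ = 2 * r * ∑ j, g j * ‖y j‖ := by rw [← sum_mul, mul_comm]
      _ ≤ 2 * r * (G * Y) := by gcongr; exact sum_mul_le_sqrt_mul_sqrt _ _ _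
  calc ‖∑ j, (p j - p' j) • y j‖ ≤ ∑ j, |p j - p' j| * ‖y j‖ :=
        (norm_sum_le _ _).trans_eq (by simp only [norm_smul, Real.norm_eq_abs])
    _ ≤ ∑ j, (g j * (p j + p' j) + p' j * ∑ l, g l * p l + p j * ∑ l, g l * p' l) / 2 * ‖y j‖ :=
        sum_le_sum fun j _ => by gcongr; exact abs_softmax_sub_softmax_le hg j
    _ = (∑ j, g j * ‖y j‖ * (p j + p' j) + (∑ l, g l * p l) * ∑ j, p' j * ‖y j‖
          + (∑ l, g l * p' l) * ∑ j, p j * ‖y j‖) / 2 := by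
        rw [mul_sum, mul_sum, ← sum_add_distrib, ← sum_add_distrib, sum_div]
        exact sum_congr rfl fun j _ => by ring
    _ ≤ (2 * r * (G * Y) + (√r * G) * (√r * Y) + (√r * G) * (√r * Y)) / 2 := by
        have := sum_nonneg fun j (_ : j ∈ univ) => mul_nonneg (hg₀ j) (hp j)
        have := sum_nonneg fun j (_ : j ∈ univ) => mul_nonneg (hg₀ j) (hp' j)
        gcongr
        · exact sum_nonneg fun j _ => mul_nonneg (hp' j) (norm_nonneg _)
        · exact sum_nonneg fun j _ => mul_nonneg (hp j) (norm_nonneg _)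
    _ = 2 * r * G * Y := by
        linear_combination (G * Y) * mul_self_sqrt hr

lemma norm_sum_softmax_smul_sub_le [Nonempty ι] {φ ψ : ι → ℝ} {r c : ℝ} (hc : 0 ≤ c)
    (hφ : ∀ j, softmax φ j ≤ r) (hψ : ∀ j, softmax ψ j ≤ r) {x y : ι → E}
    (hgap : ∀ j, |φ j - ψ j| ≤ c * ‖x j - y j‖) :
    ‖∑ j, softmax φ j • x j - ∑ j, softmax ψ j • y j‖ ≤
      (1 + 2 * r * c * √(∑ j, ‖y j‖ ^ 2)) * √(∑ j, ‖x j - y j‖ ^ 2) := by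
  have hsplit : ∑ j, softmax φ j • x j - ∑ j, softmax ψ j • y j
      = ∑ j, softmax φ j • (x j - y j) + ∑ j, (softmax φ j - softmax ψ j) • y j := by
    simp only [smul_sub, sub_smul, sum_sub_distrib]
    abel
  have hconvex : ‖∑ j, softmax φ j • (x j - y j)‖ ≤ √(∑ j, ‖x j - y j‖ ^ 2) := by
    simpa using (convex_closedBall (0 : E) _).sum_mem (fun j _ => (softmax_pos φ j).le)
      (sum_softmax φ) fun j _ => mem_closedBall_zero_iff.2 (norm_le_sqrt_sum_sq (x - y) j)
  have hscale : √(∑ j, (c * ‖x j - y j‖) ^ 2) = c * √(∑ j, ‖x j - y j‖ ^ 2) := by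
    simp only [mul_pow, ← mul_sum]
    rw [sqrt_mul (sq_nonneg c), sqrt_sq hc]
  have hshift := norm_sum_softmax_sub_smul_le hφ hψ hgap y
  rw [hscale] at hshift
  rw [hsplit]
  linarith [norm_add_le (∑ j, softmax φ j • (x j - y j)) (∑ j, (softmax φ j - softmax ψ j) • y j)]

end Softmax

lemma le_sSup_image_sub_of_abs_sub_le {E : Type*} [SeminormedAddCommGroup E] {f : E → ℝ}
    {k L : ℝ} (c : ℝ) (hk : 0 ≤ k)
    (hLip : ∀ x ∈ closedBall (0 : E) k, ∀ y ∈ closedBall (0 : E) k, |f x - f y| ≤ L * ‖x - y‖)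
    {x : E} (hx : x ∈ closedBall (0 : E) k) :
    f x - c ≤ sSup ((fun x => f x - c) '' closedBall (0 : E) k) := by
  refine le_csSup ⟨f 0 - c + |L| * k, ?_⟩ (Set.mem_image_of_mem _ hx)
  rintro _ ⟨z, hz, rfl⟩
  have h₁ := (le_abs_self _).trans (hLip z hz 0 (mem_closedBall_self hk))
  have h₂ : L * ‖z - 0‖ ≤ |L| * k :=
    mul_le_mul (le_abs_self L) (by simpa using hz) (norm_nonneg _) (abs_nonneg L)
  dsimp only
  linarith

lemma driftFN_eq_sub_sum_softmax_smul {d N : ℕ} (α : ℝ) (f : EuclideanSpace ℝ (Fin d) → ℝ)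
    (X : Fin N → EuclideanSpace ℝ (Fin d)) (i : Fin N) :
    driftFN α f X i = X i - ∑ j, softmax (fun l => -α * f (X l)) j • X j := by
  have : Nonempty (Fin N) := ⟨i⟩
  have hS := (sum_exp_pos fun l => -α * f (X l)).ne'
  rw [driftFN, sum_erase _ (by rw [sub_self, smul_zero])]
  simp only [softmax, div_eq_inv_mul, mul_smul, ← smul_sum, smul_sub, sum_sub_distrib, ← sum_smul]
  rw [smul_smul, inv_mul_cancel₀ hS, one_smul]

theorem drift_local_lipschitz_general {d N : ℕ}
    (f : EuclideanSpace ℝ (Fin d) → ℝ) (fbar : ℝ)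
    (hglb : IsGLB (Set.range f) fbar)
    (α k Lk : ℝ) (hα : 0 < α)
    (hLip : ∀ x ∈ Metric.closedBall (0 : EuclideanSpace ℝ (Fin d)) k,
      ∀ y ∈ Metric.closedBall (0 : EuclideanSpace ℝ (Fin d)) k,
        |f x - f y| ≤ Lk * ‖x - y‖)
    (X Xh : Fin N → EuclideanSpace ℝ (Fin d))
    (hX : prodNorm X ≤ k) (hXh : prodNorm Xh ≤ k) (i : Fin N) :
    ‖driftFN α f X i - driftFN α f Xh i‖ ≤ ‖X i - Xh i‖ +
      (1 + (2 * (α * Lk * Real.exp (α * sSup ((fun x => f x - fbar) ''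
          Metric.closedBall (0 : EuclideanSpace ℝ (Fin d)) k))) / N) *
        Real.sqrt (N * ‖Xh i‖ ^ 2 + prodNorm Xh ^ 2)) * prodNorm (X - Xh) := by
  obtain rfl | hne := eq_or_ne X Xh
  · simp [prodNorm]
  have : Nonempty (Fin N) := ⟨i⟩
  have hk : 0 ≤ k := (sqrt_nonneg _).trans hX
  have hball : ∀ Z : Fin N → EuclideanSpace ℝ (Fin d), prodNorm Z ≤ k →
      ∀ l, Z l ∈ closedBall 0 k := fun Z hZ l =>
    mem_closedBall_zero_iff.2 ((norm_le_sqrt_sum_sq Z l).trans hZ)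
  obtain ⟨j, hj⟩ := Function.ne_iff.1 hne
  have hLk : 0 ≤ Lk := nonneg_of_mul_nonneg_left
    ((abs_nonneg _).trans (hLip _ (hball X hX j) _ (hball Xh hXh j)))
    (norm_pos_iff.2 (sub_ne_zero.2 hj))
  set M := sSup ((fun x => f x - fbar) '' closedBall 0 k)
  have hweight : ∀ Z : Fin N → EuclideanSpace ℝ (Fin d), prodNorm Z ≤ k → ∀ l,
      softmax (fun l => -α * f (Z l)) l ≤ exp (α * M) / N := fun Z hZ l => by
    simpa using softmax_neg_mul_le_exp_div_card hα.le (fun l => hglb.1 ⟨Z l, rfl⟩)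
      (fun l => le_sSup_image_sub_of_abs_sub_le fbar hk hLip (hball Z hZ l)) l
  have hgap : ∀ l, |-α * f (X l) - -α * f (Xh l)| ≤ α * Lk * ‖X l - Xh l‖ := fun l => by
    rw [← mul_sub, abs_mul, abs_neg, abs_of_pos hα, mul_assoc]
    exact mul_le_mul_of_nonneg_left (hLip _ (hball X hX l) _ (hball Xh hXh l)) hα.le
  rw [driftFN_eq_sub_sum_softmax_smul, driftFN_eq_sub_sum_softmax_smul, sub_sub_sub_comm]
  refine (norm_sub_le _ _).trans (add_le_add_right ((norm_sum_softmax_smul_sub_le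
    (mul_nonneg hα.le hLk) (hweight X hX) (hweight Xh hXh) hgap).trans ?_) _)
  rw [show 2 * (exp (α * M) / N) * (α * Lk) = 2 * (α * Lk * exp (α * M)) / N by ring]
  gcongr (1 + _ * ?_) * _
  exact le_sqrt_of_sq_le (le_add_of_nonneg_left (by positivity))

theorem drift_local_lipschitz {d N : ℕ} (hN : 0 < N)
    (f : EuclideanSpace ℝ (Fin d) → ℝ) (fbar : ℝ)
    (hglb : IsGLB (Set.range f) fbar)
    (α k Lk : ℝ) (hα : 0 < α) (hk : 0 < k)
    (hLip : ∀ x ∈ Metric.closedBall (0 : EuclideanSpace ℝ (Fin d)) k,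
      ∀ y ∈ Metric.closedBall (0 : EuclideanSpace ℝ (Fin d)) k,
        |f x - f y| ≤ Lk * ‖x - y‖)
    (X Xh : Fin N → EuclideanSpace ℝ (Fin d))
    (hX : prodNorm X ≤ k) (hXh : prodNorm Xh ≤ k) (i : Fin N) :
    ‖driftFN α f X i - driftFN α f Xh i‖ ≤ ‖X i - Xh i‖ +
      (1 + (2 * (α * Lk * Real.exp (α * sSup ((fun x => f x - fbar) ''
          Metric.closedBall (0 : EuclideanSpace ℝ (Fin d)) k))) / N) *
        Real.sqrt (N * ‖Xh i‖ ^ 2 + prodNorm Xh ^ 2)) * prodNorm (X - Xh) :=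
  drift_local_lipschitz_general f fbar hglb α k Lk hα hLip X Xh hX hXh i
end

section
/- Let f : ℝ^d → ℝ, α > 0, λ > 0, σ > 0 and N ∈ ℕ. Then for every X = (X¹,…,X^N) ∈ (ℝ^d)^N with Σ_j exp(−α f(X^j)) > 0, one has Σ_{i=1}^N ( −2λ X^i · F_N^i(X) + d σ² |F_N^i(X)|² ) ≤ b_N |X|², where b_N = 2(λ√N + 2 d σ² N). -/
open Finset
open scoped RealInnerProductSpace

theorem sum_le_sqrt_card_mul_sqrt_sum_sq {ι : Type*} (s : Finset ι) {f : ι → ℝ}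
    (hf : ∀ i ∈ s, 0 ≤ f i) : ∑ i ∈ s, f i ≤ √(#s) * √(∑ i ∈ s, f i ^ 2) := by
  rw [← Real.sqrt_mul (by positivity), Real.le_sqrt (sum_nonneg hf) (by positivity)]
  exact sq_sum_le_card_mul_sum_sq

section InnerProductSpace

variable {ι E : Type*} [NormedAddCommGroup E] [InnerProductSpace ℝ E]

theorem Finset.norm_centerMass_le {t : Finset ι} {w : ι → ℝ} {x : ι → E} {R : ℝ}
    (hw₀ : ∀ j ∈ t, 0 ≤ w j) (hw : 0 < ∑ j ∈ t, w j) (hx : ∀ j ∈ t, ‖x j‖ ≤ R) :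
    ‖t.centerMass w x‖ ≤ R := by
  simpa using (convex_closedBall (0 : E) R).centerMass_mem hw₀ hw (by simpa using hx)

theorem inv_sum_smul_sum_erase_smul_sub [Fintype ι] [DecidableEq ι] (w : ι → ℝ) (x : ι → E)
    (i : ι) (hw : ∑ j, w j ≠ 0) :
    (∑ j, w j)⁻¹ • ∑ j ∈ univ.erase i, w j • (x i - x j) = x i - univ.centerMass w x := by
  rw [sum_erase univ (f := fun j => w j • (x i - x j)) (by simp)]
  simp_rw [smul_sub, sum_sub_distrib, ← sum_smul, Finset.centerMass, smul_sub,
    inv_smul_smul₀ hw]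

theorem neg_inner_self_sub_le (x m : E) : -⟪x, x - m⟫ ≤ ‖x‖ * ‖m‖ := by
  rw [inner_sub_right, real_inner_self_eq_norm_sq]
  nlinarith [real_inner_le_norm x m, sq_nonneg ‖x‖]

theorem neg_inner_self_sub_add_norm_sub_sq_le {x m : E} {R lam c : ℝ} (hlam : 0 ≤ lam)
    (hc : 0 ≤ c) (hx : ‖x‖ ≤ R) (hm : ‖m‖ ≤ R) :
    -2 * lam * ⟪x, x - m⟫ + c * ‖x - m‖ ^ 2 ≤ 2 * lam * R * ‖x‖ + 4 * c * R ^ 2 := by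
  have hinner : -⟪x, x - m⟫ ≤ R * ‖x‖ :=
    (neg_inner_self_sub_le x m).trans (by rw [mul_comm]; gcongr)
  have hnorm : ‖x - m‖ ≤ 2 * R := (norm_sub_le x m).trans (by linarith)
  calc -2 * lam * ⟪x, x - m⟫ + c * ‖x - m‖ ^ 2
      = 2 * lam * -⟪x, x - m⟫ + c * ‖x - m‖ ^ 2 := by ring
    _ ≤ 2 * lam * (R * ‖x‖) + c * (2 * R) ^ 2 := by gcongr
    _ = 2 * lam * R * ‖x‖ + 4 * c * R ^ 2 := by ring

end InnerProductSpace

section ParticleSystem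

variable {d N : ℕ}

theorem norm_le_prodNorm (X : Fin N → EuclideanSpace ℝ (Fin d)) (i : Fin N) :
    ‖X i‖ ≤ prodNorm X :=
  Real.le_sqrt_of_sq_le (single_le_sum (fun j _ => sq_nonneg ‖X j‖) (mem_univ i))

theorem sum_norm_le_sqrt_mul_prodNorm (X : Fin N → EuclideanSpace ℝ (Fin d)) :
    ∑ i, ‖X i‖ ≤ √N * prodNorm X := by
  simpa [prodNorm] using sum_le_sqrt_card_mul_sqrt_sum_sq univ fun i _ => norm_nonneg (X i)

theorem driftFN_eq_sub_centerMass (α : ℝ) (f : EuclideanSpace ℝ (Fin d) → ℝ)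
    (X : Fin N → EuclideanSpace ℝ (Fin d)) (i : Fin N) :
    driftFN α f X i = X i - univ.centerMass (fun j => Real.exp (-α * f (X j))) X :=
  inv_sum_smul_sum_erase_smul_sub _ X i
    (sum_pos (fun _ _ => Real.exp_pos _) ⟨i, mem_univ i⟩).ne'

theorem norm_centerMass_exp_le_prodNorm (α : ℝ) (f : EuclideanSpace ℝ (Fin d) → ℝ)
    (X : Fin N → EuclideanSpace ℝ (Fin d)) (i : Fin N) :
    ‖univ.centerMass (fun j => Real.exp (-α * f (X j))) X‖ ≤ prodNorm X :=
  norm_centerMass_le (fun _ _ => (Real.exp_pos _).le)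
    (sum_pos (fun _ _ => Real.exp_pos _) ⟨i, mem_univ i⟩) fun j _ => norm_le_prodNorm X j

end ParticleSystem

theorem drift_one_sided_estimate_general {d N : ℕ} (f : EuclideanSpace ℝ (Fin d) → ℝ)
    (α lam σ : ℝ) (hlam : 0 < lam)
    (X : Fin N → EuclideanSpace ℝ (Fin d)) :
    ∑ i, (-2 * lam * ⟪X i, driftFN α f X i⟫ + d * σ ^ 2 * ‖driftFN α f X i‖ ^ 2) ≤
      2 * (lam * Real.sqrt N + 2 * d * σ ^ 2 * N) * prodNorm X ^ 2 := by
  set R := prodNorm X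
  calc ∑ i, (-2 * lam * ⟪X i, driftFN α f X i⟫ + d * σ ^ 2 * ‖driftFN α f X i‖ ^ 2)
      ≤ ∑ i, (2 * lam * R * ‖X i‖ + 4 * (d * σ ^ 2) * R ^ 2) :=
        sum_le_sum fun i _ => by
          rw [driftFN_eq_sub_centerMass]
          exact neg_inner_self_sub_add_norm_sub_sq_le hlam.le (by positivity)
            (norm_le_prodNorm X i) (norm_centerMass_exp_le_prodNorm α f X i)
    _ = 2 * lam * R * ∑ i, ‖X i‖ + N * (4 * (d * σ ^ 2) * R ^ 2) := by
        simp [sum_add_distrib, mul_sum]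
    _ ≤ 2 * lam * R * (√N * R) + N * (4 * (d * σ ^ 2) * R ^ 2) := by
        gcongr
        · exact mul_nonneg (by positivity) (Real.sqrt_nonneg _)
        · exact sum_norm_le_sqrt_mul_prodNorm X
    _ = 2 * (lam * Real.sqrt N + 2 * d * σ ^ 2 * N) * R ^ 2 := by ring

theorem drift_one_sided_estimate {d N : ℕ} (f : EuclideanSpace ℝ (Fin d) → ℝ)
    (α lam σ : ℝ) (hα : 0 < α) (hlam : 0 < lam) (hσ : 0 < σ)
    (X : Fin N → EuclideanSpace ℝ (Fin d))
    (hpos : 0 < ∑ j, Real.exp (-α * f (X j))) :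
    ∑ i, (-2 * lam * ⟪X i, driftFN α f X i⟫ + d * σ ^ 2 * ‖driftFN α f X i‖ ^ 2) ≤
      2 * (lam * Real.sqrt N + 2 * d * σ ^ 2 * N) * prodNorm X ^ 2 :=
  drift_one_sided_estimate_general f α lam σ hlam X
end

section
/- Let f : ℝ^d → ℝ be bounded below with infimum f̲ and satisfy |f(x) − f(y)| ≤ L_f(|x|+|y|)|x−y| for all x,y, and f(x) − f̲ ≤ c_u(1+|x|²) for all x, with constants L_f, c_u > 0. Let α > 0 and K ≥ 0. Then there exists a constant c₀ > 0, depending only on α, L_f, c_u and K, such that for all Borel probability measures μ, μ̂ on ℝ^d with ∫|x|⁴ dμ ≤ K and ∫|x̂|⁴ dμ̂ ≤ K, and every coupling π of μ and μ̂ (i.e. every Borel probability measure on ℝ^d × ℝ^d with marginals μ and μ̂), one has |m_f[μ] − m_f[μ̂]| ≤ c₀ (∬ |x − x̂|² dπ(x, x̂))^{1/2}. In particular |m_f[μ] − m_f[μ̂]| ≤ c₀ W₂(μ, μ̂). -/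
/-!
Subtracting `inf f` multiplies the weight by a constant and so does not change the weighted mean;
afterwards the weight `ω = exp (-α (f - inf f))` takes values in `(0, 1]` and inherits the growth
Lipschitz bound `|ω x - ω y| ≤ α L_f (‖x‖ + ‖y‖) ‖x - y‖`. By Markov's inequality for `‖x‖ ^ 4`,
at least half of the mass of `μ` sits where `‖x‖ ^ 2 ≤ √(2 (K + 1))`, and there `ω` is bounded
below, so `∫ ω dμ` is bounded below uniformly. Numerator and denominator of the weighted mean then
differ between `μ` and `μ̂` by at most `(1 + α L_f) ∫ (1 + ‖x‖ + ‖x̂‖)² ‖x - x̂‖ dπ`, which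
Cauchy–Schwarz and the fourth moments bound by a constant times `(∫ ‖x - x̂‖² dπ)^{1/2}`.
-/

open MeasureTheory

theorem Real.abs_exp_neg_mul_sub_exp_neg_mul_le {α a b : ℝ} (hα : 0 ≤ α) (ha : 0 ≤ a)
    (hb : 0 ≤ b) : |Real.exp (-α * a) - Real.exp (-α * b)| ≤ α * |a - b| := by
  wlog hba : b ≤ a generalizing a b
  · rw [abs_sub_comm, abs_sub_comm a]
    exact this hb ha (le_of_not_ge hba)
  have hexp : Real.exp (-α * a) = Real.exp (-α * b) * Real.exp (-(α * (a - b))) := by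
    rw [← Real.exp_add]; ring_nf
  have hb₁ : Real.exp (-α * b) ≤ 1 := Real.exp_le_one_iff.mpr (by nlinarith)
  have hab : Real.exp (-(α * (a - b))) ≤ 1 :=
    Real.exp_le_one_iff.mpr (neg_nonpos.mpr (mul_nonneg hα (sub_nonneg.mpr hba)))
  have hlin : 1 - Real.exp (-(α * (a - b))) ≤ α * (a - b) := by
    linarith [Real.add_one_le_exp (-(α * (a - b)))]
  rw [abs_sub_comm, abs_of_nonneg (sub_nonneg.mpr hba), hexp]
  calc |Real.exp (-α * b) - Real.exp (-α * b) * Real.exp (-(α * (a - b)))|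
      = Real.exp (-α * b) * (1 - Real.exp (-(α * (a - b)))) := by
        rw [← mul_one_sub, abs_of_nonneg (mul_nonneg (Real.exp_pos _).le (sub_nonneg.mpr hab))]
    _ ≤ 1 * (α * (a - b)) := mul_le_mul hb₁ hlin (sub_nonneg.mpr hab) zero_le_one
    _ = α * (a - b) := one_mul _

theorem abs_exp_neg_mul_comp_sub_exp_neg_mul_comp_le {E : Type*} [SeminormedAddCommGroup E]
    {g : E → ℝ} {α L : ℝ} (hα : 0 ≤ α) (hg₀ : ∀ x, 0 ≤ g x)
    (hgL : ∀ x y, |g x - g y| ≤ L * (‖x‖ + ‖y‖) * ‖x - y‖) (x y : E) :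
    |Real.exp (-α * g x) - Real.exp (-α * g y)| ≤ α * L * (‖x‖ + ‖y‖) * ‖x - y‖ :=
  calc |Real.exp (-α * g x) - Real.exp (-α * g y)| ≤ α * |g x - g y| :=
        Real.abs_exp_neg_mul_sub_exp_neg_mul_le hα (hg₀ x) (hg₀ y)
    _ ≤ α * (L * (‖x‖ + ‖y‖) * ‖x - y‖) := mul_le_mul_of_nonneg_left (hgL x y) hα
    _ = α * L * (‖x‖ + ‖y‖) * ‖x - y‖ := by ring

theorem add_add_pow_four_le (a b c : ℝ) : (a + b + c) ^ 4 ≤ 27 * (a ^ 4 + b ^ 4 + c ^ 4) := by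
  have h2 : (a + b + c) ^ 2 ≤ 3 * (a ^ 2 + b ^ 2 + c ^ 2) := by
    nlinarith [sq_nonneg (a - b), sq_nonneg (b - c), sq_nonneg (a - c)]
  have h4 : (a ^ 2 + b ^ 2 + c ^ 2) ^ 2 ≤ 3 * (a ^ 4 + b ^ 4 + c ^ 4) := by
    nlinarith [sq_nonneg (a ^ 2 - b ^ 2), sq_nonneg (b ^ 2 - c ^ 2), sq_nonneg (a ^ 2 - c ^ 2)]
  calc (a + b + c) ^ 4 = ((a + b + c) ^ 2) ^ 2 := by ring
    _ ≤ (3 * (a ^ 2 + b ^ 2 + c ^ 2)) ^ 2 := pow_le_pow_left₀ (sq_nonneg _) h2 2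
    _ ≤ 27 * (a ^ 4 + b ^ 4 + c ^ 4) := by nlinarith

theorem norm_sub_le_one_add_norm_add_norm_sq {E : Type*} [SeminormedAddCommGroup E] (x y : E) :
    ‖x - y‖ ≤ (1 + ‖x‖ + ‖y‖) ^ 2 :=
  (norm_sub_le x y).trans <| by nlinarith [norm_nonneg x, norm_nonneg y]

theorem continuous_of_norm_sub_le_mul_norm_add_norm {E F : Type*} [SeminormedAddCommGroup E]
    [SeminormedAddCommGroup F] {φ : E → F} {L : ℝ}
    (hφ : ∀ x y, ‖φ x - φ y‖ ≤ L * (‖x‖ + ‖y‖) * ‖x - y‖) : Continuous φ := by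
  refine continuous_iff_continuousAt.mpr fun x₀ => tendsto_iff_norm_sub_tendsto_zero.mpr ?_
  have hbound : Filter.Tendsto (fun x => L * (‖x‖ + ‖x₀‖) * ‖x - x₀‖) (nhds x₀) (nhds 0) := by
    simpa using (show Continuous fun x => L * (‖x‖ + ‖x₀‖) * ‖x - x₀‖ by fun_prop).tendsto x₀
  exact squeeze_zero (fun _ => norm_nonneg _) (fun x => hφ x x₀) hbound

theorem integral_mul_le_sqrt_mul_sqrt {X : Type*} [MeasurableSpace X] {μ : Measure X}
    {f g : X → ℝ} (hf : MemLp f 2 μ) (hg : MemLp g 2 μ) :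
    ∫ x, f x * g x ∂μ ≤ √(∫ x, f x ^ 2 ∂μ) * √(∫ x, g x ^ 2 ∂μ) := by
  have hfg : Integrable (fun x => |f x| * |g x|) μ := hf.abs.integrable_mul hg.abs
  have hCS := integral_mul_le_Lp_mul_Lq_of_nonneg Real.HolderConjugate.two_two
    (Filter.Eventually.of_forall fun x => abs_nonneg (f x))
    (Filter.Eventually.of_forall fun x => abs_nonneg (g x))
    (by rw [ENNReal.ofReal_ofNat]; exact hf.abs) (by rw [ENNReal.ofReal_ofNat]; exact hg.abs)
  simp only [Real.rpow_two, sq_abs, ← Real.sqrt_eq_rpow] at hCS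
  calc ∫ x, f x * g x ∂μ ≤ ∫ x, |f x| * |g x| ∂μ :=
        integral_mono (hf.integrable_mul hg) hfg fun x => (le_abs_self _).trans (abs_mul _ _).le
    _ ≤ _ := hCS

theorem div_two_le_integral_of_moment_le {X : Type*} [MeasurableSpace X] {μ : Measure X}
    [IsProbabilityMeasure μ] {ω m : X → ℝ} {c M : ℝ} (hc : 0 ≤ c) (hM : 0 < M)
    (hω₀ : ∀ x, 0 ≤ ω x) (hω : Integrable ω μ) (hm₀ : ∀ x, 0 ≤ m x) (hm : Integrable m μ)
    (hmM : ∫ x, m x ∂μ ≤ M) (hωm : ∀ x, m x ≤ 2 * M → c ≤ ω x) :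
    c / 2 ≤ ∫ x, ω x ∂μ := by
  -- Markov's inequality in integrated form: `ω ≥ c (1 - m / 2M)` pointwise.
  have hpt : ∀ x, c - c / (2 * M) * m x ≤ ω x := by
    intro x
    by_cases hx : m x ≤ 2 * M
    · have : 0 ≤ c / (2 * M) * m x := mul_nonneg (by positivity) (hm₀ x)
      linarith [hωm x hx]
    · have : c ≤ c / (2 * M) * m x := by
        rw [div_mul_eq_mul_div, le_div_iff₀ (by positivity)]
        exact mul_le_mul_of_nonneg_left (not_le.mp hx).le hc
      linarith [hω₀ x]
  have hlow : Integrable (fun x => c - c / (2 * M) * m x) μ :=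
    (integrable_const c).sub (hm.const_mul _)
  calc c / 2 = c - c / (2 * M) * M := by field_simp; ring
    _ ≤ c - c / (2 * M) * ∫ x, m x ∂μ := by gcongr
    _ = ∫ x, (c - c / (2 * M) * m x) ∂μ := by
        rw [integral_sub (integrable_const c) (hm.const_mul _), integral_const_mul,
          integral_const, probReal_univ, one_smul]
    _ ≤ ∫ x, ω x ∂μ := integral_mono hlow hω hpt

theorem norm_integral_map_fst_sub_integral_map_snd_le {X F : Type*} [MeasurableSpace X]
    [NormedAddCommGroup F] [NormedSpace ℝ F] {π : Measure (X × X)} {φ : X → F} {G : X × X → ℝ}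
    (hφm : StronglyMeasurable φ) (hφ₁ : Integrable φ (π.map Prod.fst))
    (hφ₂ : Integrable φ (π.map Prod.snd)) (hG : Integrable G π)
    (hφG : ∀ p, ‖φ p.1 - φ p.2‖ ≤ G p) :
    ‖∫ x, φ x ∂(π.map Prod.fst) - ∫ x, φ x ∂(π.map Prod.snd)‖ ≤ ∫ p, G p ∂π := by
  have h₁ : Integrable (fun p : X × X => φ p.1) π := hφ₁.comp_measurable measurable_fst
  have h₂ : Integrable (fun p : X × X => φ p.2) π := hφ₂.comp_measurable measurable_snd
  rw [integral_map measurable_fst.aemeasurable hφm.aestronglyMeasurable,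
    integral_map measurable_snd.aemeasurable hφm.aestronglyMeasurable, ← integral_sub h₁ h₂]
  exact norm_integral_le_of_norm_le hG (Filter.Eventually.of_forall hφG)

section Coupling

variable {E : Type*} [NormedAddCommGroup E] [MeasurableSpace E] [BorelSpace E]
  [SecondCountableTopology E] {π : Measure (E × E)}

theorem integrable_one_add_norm_add_norm_pow_four [IsFiniteMeasure π]
    (h₁ : Integrable (fun x => ‖x‖ ^ 4) (π.map Prod.fst))
    (h₂ : Integrable (fun x => ‖x‖ ^ 4) (π.map Prod.snd)) :
    Integrable (fun p : E × E => (1 + ‖p.1‖ + ‖p.2‖) ^ 4) π := by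
  have hm : Integrable (fun p : E × E => 27 * (1 ^ 4 + ‖p.1‖ ^ 4 + ‖p.2‖ ^ 4)) π :=
    (((integrable_const _).add (h₁.comp_measurable measurable_fst)).add
      (h₂.comp_measurable measurable_snd)).const_mul 27
  refine hm.mono' (by fun_prop : Continuous _).aestronglyMeasurable (.of_forall fun p => ?_)
  rw [Real.norm_of_nonneg (by positivity)]
  exact add_add_pow_four_le _ _ _

theorem integral_one_add_norm_add_norm_pow_four_le [IsProbabilityMeasure π]
    (h₁ : Integrable (fun x => ‖x‖ ^ 4) (π.map Prod.fst))
    (h₂ : Integrable (fun x => ‖x‖ ^ 4) (π.map Prod.snd)) :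
    ∫ p, (1 + ‖p.1‖ + ‖p.2‖) ^ 4 ∂π ≤
      27 * (1 + ∫ x, ‖x‖ ^ 4 ∂(π.map Prod.fst) + ∫ x, ‖x‖ ^ 4 ∂(π.map Prod.snd)) := by
  have h₁' : Integrable (fun p : E × E => ‖p.1‖ ^ 4) π := h₁.comp_measurable measurable_fst
  have h₂' : Integrable (fun p : E × E => ‖p.2‖ ^ 4) π := h₂.comp_measurable measurable_snd
  have h₀₁ : Integrable (fun p : E × E => 1 + ‖p.1‖ ^ 4) π := (integrable_const 1).add h₁'
  calc ∫ p, (1 + ‖p.1‖ + ‖p.2‖) ^ 4 ∂π ≤ ∫ p, 27 * (1 + ‖p.1‖ ^ 4 + ‖p.2‖ ^ 4) ∂π :=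
        integral_mono (integrable_one_add_norm_add_norm_pow_four h₁ h₂)
          ((h₀₁.add h₂').const_mul 27)
          fun p => by simpa using add_add_pow_four_le 1 ‖p.1‖ ‖p.2‖
    _ = 27 * (1 + ∫ x, ‖x‖ ^ 4 ∂(π.map Prod.fst) + ∫ x, ‖x‖ ^ 4 ∂(π.map Prod.snd)) := by
        rw [integral_const_mul, integral_add h₀₁ h₂',
          integral_add (integrable_const 1) h₁', integral_const, probReal_univ, one_smul,
          integral_map measurable_fst.aemeasurable (by fun_prop),
          integral_map measurable_snd.aemeasurable (by fun_prop)]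

theorem memLp_one_add_norm_add_norm_sq [IsFiniteMeasure π]
    (h₁ : Integrable (fun x => ‖x‖ ^ 4) (π.map Prod.fst))
    (h₂ : Integrable (fun x => ‖x‖ ^ 4) (π.map Prod.snd)) :
    MemLp (fun p : E × E => (1 + ‖p.1‖ + ‖p.2‖) ^ 2) 2 π := by
  refine (memLp_two_iff_integrable_sq (by fun_prop)).mpr ?_
  simpa only [← pow_mul] using integrable_one_add_norm_add_norm_pow_four h₁ h₂

theorem memLp_norm_sub [IsFiniteMeasure π]
    (h₁ : Integrable (fun x => ‖x‖ ^ 4) (π.map Prod.fst))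
    (h₂ : Integrable (fun x => ‖x‖ ^ 4) (π.map Prod.snd)) :
    MemLp (fun p : E × E => ‖p.1 - p.2‖) 2 π := by
  refine (memLp_one_add_norm_add_norm_sq h₁ h₂).mono
    (by fun_prop : Continuous _).aestronglyMeasurable (.of_forall fun p => ?_)
  rw [norm_norm, Real.norm_of_nonneg (by positivity)]
  exact norm_sub_le_one_add_norm_add_norm_sq p.1 p.2

theorem integral_one_add_norm_add_norm_sq_mul_norm_sub_le [IsProbabilityMeasure π]
    (h₁ : Integrable (fun x => ‖x‖ ^ 4) (π.map Prod.fst))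
    (h₂ : Integrable (fun x => ‖x‖ ^ 4) (π.map Prod.snd)) :
    ∫ p, (1 + ‖p.1‖ + ‖p.2‖) ^ 2 * ‖p.1 - p.2‖ ∂π ≤
      √(27 * (1 + ∫ x, ‖x‖ ^ 4 ∂(π.map Prod.fst) + ∫ x, ‖x‖ ^ 4 ∂(π.map Prod.snd))) *
        √(∫ p, ‖p.1 - p.2‖ ^ 2 ∂π) := by
  refine (integral_mul_le_sqrt_mul_sqrt (memLp_one_add_norm_add_norm_sq h₁ h₂)
    (memLp_norm_sub h₁ h₂)).trans ?_
  gcongr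
  simpa only [← pow_mul] using integral_one_add_norm_add_norm_pow_four_le h₁ h₂

end Coupling

theorem norm_smul_self_le_one_add_norm_pow_four {E : Type*} [SeminormedAddCommGroup E]
    [NormedSpace ℝ E] {ω : E → ℝ} (hω₀ : ∀ x, 0 ≤ ω x) (hω₁ : ∀ x, ω x ≤ 1) (x : E) :
    ‖ω x • x‖ ≤ 1 + ‖x‖ ^ 4 := by
  rw [norm_smul, Real.norm_of_nonneg (hω₀ x)]
  nlinarith [norm_nonneg x, hω₁ x, mul_le_mul_of_nonneg_right (hω₁ x) (norm_nonneg x),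
    sq_nonneg (‖x‖ ^ 2 - 1 / 2), sq_nonneg (‖x‖ - 1 / 2)]

theorem norm_smul_self_sub_smul_self_le {E : Type*} [SeminormedAddCommGroup E]
    [NormedSpace ℝ E] {ω : E → ℝ} {L : ℝ} (hL : 0 ≤ L) (hω₀ : ∀ x, 0 ≤ ω x)
    (hω₁ : ∀ x, ω x ≤ 1)
    (hωL : ∀ x y, |ω x - ω y| ≤ L * (‖x‖ + ‖y‖) * ‖x - y‖) (x y : E) :
    ‖ω x • x - ω y • y‖ ≤ (1 + L) * ((1 + ‖x‖ + ‖y‖) ^ 2 * ‖x - y‖) := by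
  have hx := norm_nonneg x
  have hy := norm_nonneg y
  have hxy := norm_nonneg (x - y)
  calc ‖ω x • x - ω y • y‖ = ‖ω x • (x - y) + (ω x - ω y) • y‖ := by
        rw [smul_sub, sub_smul, sub_add_sub_cancel]
    _ ≤ ω x * ‖x - y‖ + |ω x - ω y| * ‖y‖ := by
        refine (norm_add_le _ _).trans_eq ?_
        rw [norm_smul, norm_smul, Real.norm_eq_abs, Real.norm_eq_abs, abs_of_nonneg (hω₀ x)]
    _ ≤ 1 * ‖x - y‖ + L * (‖x‖ + ‖y‖) * ‖x - y‖ * ‖y‖ := by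
        gcongr
        exacts [hω₁ x, hωL x y]
    _ ≤ (1 + L) * ((1 + ‖x‖ + ‖y‖) ^ 2 * ‖x - y‖) := by
        have h1 : 1 ≤ (1 + ‖x‖ + ‖y‖) ^ 2 := one_le_pow₀ (by linarith)
        have h2 : (‖x‖ + ‖y‖) * ‖y‖ ≤ (1 + ‖x‖ + ‖y‖) ^ 2 := by nlinarith
        nlinarith [mul_le_mul_of_nonneg_left h2 hL]

theorem norm_inv_smul_sub_inv_smul_le {F : Type*} [NormedAddCommGroup F] [NormedSpace ℝ F]
    {A₁ A₂ : F} {B₁ B₂ D M T : ℝ} (hD : 0 < D) (hB₁ : D ≤ B₁) (hB₂ : D ≤ B₂) (hA₂ : ‖A₂‖ ≤ M)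
    (hA : ‖A₁ - A₂‖ ≤ T) (hB : |B₁ - B₂| ≤ T) :
    ‖B₁⁻¹ • A₁ - B₂⁻¹ • A₂‖ ≤ (1 / D + M / D ^ 2) * T := by
  have hB₁0 : 0 < B₁ := hD.trans_le hB₁
  have hB₂0 : 0 < B₂ := hD.trans_le hB₂
  have hT : 0 ≤ T := (abs_nonneg _).trans hB
  have hinv : |B₁⁻¹ - B₂⁻¹| ≤ T / D ^ 2 := by
    rw [inv_sub_inv hB₁0.ne' hB₂0.ne', abs_div, abs_sub_comm, abs_of_pos (mul_pos hB₁0 hB₂0), sq]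
    exact div_le_div₀ hT hB (mul_pos hD hD) (mul_le_mul hB₁ hB₂ hD.le hB₁0.le)
  calc ‖B₁⁻¹ • A₁ - B₂⁻¹ • A₂‖ = ‖B₁⁻¹ • (A₁ - A₂) + (B₁⁻¹ - B₂⁻¹) • A₂‖ := by
        rw [smul_sub, sub_smul, sub_add_sub_cancel]
    _ ≤ B₁⁻¹ * ‖A₁ - A₂‖ + |B₁⁻¹ - B₂⁻¹| * ‖A₂‖ := by
        refine (norm_add_le _ _).trans_eq ?_
        rw [norm_smul, norm_smul, Real.norm_eq_abs, Real.norm_eq_abs,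
          abs_of_pos (inv_pos.mpr hB₁0)]
    _ ≤ D⁻¹ * T + T / D ^ 2 * M :=
        add_le_add (mul_le_mul (inv_anti₀ hD hB₁) hA (norm_nonneg _) (inv_nonneg.mpr hD.le))
          (mul_le_mul hinv hA₂ (norm_nonneg _) (div_nonneg hT (sq_nonneg _)))
    _ = (1 / D + M / D ^ 2) * T := by ring

section WeightedMean

variable {E : Type*} [NormedAddCommGroup E] [NormedSpace ℝ E] [MeasurableSpace E]

/-- `m_f[μ] = weightedMean (fun x => exp (-α * f x)) μ`; it is `0` when `∫ ω ∂μ = 0`. -/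
noncomputable def weightedMean (ω : E → ℝ) (μ : Measure E) : E :=
  (∫ x, ω x ∂μ)⁻¹ • ∫ x, ω x • x ∂μ

theorem weightedMean_const_mul (ω : E → ℝ) (μ : Measure E) {c : ℝ} (hc : c ≠ 0) :
    weightedMean (fun x => c * ω x) μ = weightedMean ω μ := by
  unfold weightedMean
  simp_rw [mul_smul]
  rw [integral_const_mul, integral_smul, smul_smul, mul_inv, mul_right_comm, inv_mul_cancel₀ hc,
    one_mul]

theorem norm_integral_smul_self_le {ν : Measure E} [IsProbabilityMeasure ν] {ω : E → ℝ}
    (hω₀ : ∀ x, 0 ≤ ω x) (hω₁ : ∀ x, ω x ≤ 1) (h4 : Integrable (fun x => ‖x‖ ^ 4) ν) :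
    ‖∫ x, ω x • x ∂ν‖ ≤ 1 + ∫ x, ‖x‖ ^ 4 ∂ν := by
  have hm : Integrable (fun x => 1 + ‖x‖ ^ 4) ν := (integrable_const 1).add h4
  refine (norm_integral_le_of_norm_le hm
    (.of_forall (norm_smul_self_le_one_add_norm_pow_four hω₀ hω₁))).trans_eq ?_
  rw [integral_add (integrable_const 1) h4, integral_const, probReal_univ, one_smul]

end WeightedMean

theorem exp_div_two_le_integral_exp_neg_mul {E : Type*} [NormedAddCommGroup E]
    [MeasurableSpace E] [OpensMeasurableSpace E] {ν : Measure E} [IsProbabilityMeasure ν]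
    {g : E → ℝ} {α cu K : ℝ} (hα : 0 ≤ α) (hcu : 0 ≤ cu) (hgc : Continuous g)
    (hg₀ : ∀ x, 0 ≤ g x) (hgu : ∀ x, g x ≤ cu * (1 + ‖x‖ ^ 2))
    (h4 : Integrable (fun x => ‖x‖ ^ 4) ν) (hK : ∫ x, ‖x‖ ^ 4 ∂ν ≤ K) :
    Real.exp (-(α * cu * (1 + √(2 * (K + 1))))) / 2 ≤ ∫ x, Real.exp (-α * g x) ∂ν := by
  have hK₀ : 0 ≤ K := (integral_nonneg fun x => by positivity).trans hK
  refine div_two_le_integral_of_moment_le (M := K + 1) (Real.exp_pos _).le (by linarith)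
    (fun x => (Real.exp_pos _).le) ?_ (fun x => by positivity) h4 (by linarith) fun x hx => ?_
  · refine .of_bound (by fun_prop : Continuous _).aestronglyMeasurable 1 (.of_forall fun x => ?_)
    rw [Real.norm_of_nonneg (Real.exp_pos _).le, Real.exp_le_one_iff]
    nlinarith [hg₀ x]
  · have hx2 : ‖x‖ ^ 2 ≤ √(2 * (K + 1)) :=
      (Real.le_sqrt (by positivity) (by positivity)).mpr (by rw [← pow_mul]; exact hx)
    rw [Real.exp_le_exp, neg_mul, neg_le_neg_iff, mul_assoc]
    gcongr
    exact (hgu x).trans (by gcongr)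

section Stability

variable {E : Type*} [NormedAddCommGroup E] [NormedSpace ℝ E] [MeasurableSpace E] [BorelSpace E]
  [SecondCountableTopology E]

theorem integrable_smul_self_of_integrable_norm_pow_four {ν : Measure E} [IsFiniteMeasure ν]
    {ω : E → ℝ} (hωc : Continuous ω) (hω₀ : ∀ x, 0 ≤ ω x) (hω₁ : ∀ x, ω x ≤ 1)
    (h4 : Integrable (fun x => ‖x‖ ^ 4) ν) :
    Integrable (fun x => ω x • x) ν :=
  ((integrable_const 1).add h4).mono' (by fun_prop : Continuous _).aestronglyMeasurable
    (.of_forall (norm_smul_self_le_one_add_norm_pow_four hω₀ hω₁))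

theorem norm_weightedMean_map_fst_sub_map_snd_le {π : Measure (E × E)} [IsProbabilityMeasure π]
    {ω : E → ℝ} {L D K : ℝ} (hL : 0 ≤ L) (hD : 0 < D) (hωc : Continuous ω)
    (hω₀ : ∀ x, 0 ≤ ω x) (hω₁ : ∀ x, ω x ≤ 1)
    (hωL : ∀ x y, |ω x - ω y| ≤ L * (‖x‖ + ‖y‖) * ‖x - y‖)
    (h₁ : Integrable (fun x => ‖x‖ ^ 4) (π.map Prod.fst))
    (h₂ : Integrable (fun x => ‖x‖ ^ 4) (π.map Prod.snd))
    (hK₁ : ∫ x, ‖x‖ ^ 4 ∂(π.map Prod.fst) ≤ K) (hK₂ : ∫ x, ‖x‖ ^ 4 ∂(π.map Prod.snd) ≤ K)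
    (hD₁ : D ≤ ∫ x, ω x ∂(π.map Prod.fst)) (hD₂ : D ≤ ∫ x, ω x ∂(π.map Prod.snd)) :
    ‖weightedMean ω (π.map Prod.fst) - weightedMean ω (π.map Prod.snd)‖ ≤
      (1 / D + (1 + K) / D ^ 2) * ((1 + L) * √(27 * (1 + 2 * K))) *
        √(∫ p, ‖p.1 - p.2‖ ^ 2 ∂π) := by
  have : IsProbabilityMeasure (π.map Prod.fst) := Measure.isProbabilityMeasure_map (by fun_prop)
  have : IsProbabilityMeasure (π.map Prod.snd) := Measure.isProbabilityMeasure_map (by fun_prop)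
  have hK : 0 ≤ K := (integral_nonneg fun _ => by positivity).trans hK₁
  have hω : ∀ (ν : Measure E) [IsFiniteMeasure ν], Integrable ω ν := fun ν _ =>
    .of_bound hωc.aestronglyMeasurable 1 (.of_forall fun x => by
      rw [Real.norm_of_nonneg (hω₀ x)]; exact hω₁ x)
  set G : E × E → ℝ := fun p => (1 + L) * ((1 + ‖p.1‖ + ‖p.2‖) ^ 2 * ‖p.1 - p.2‖)
  have hG : Integrable G π :=
    ((memLp_one_add_norm_add_norm_sq h₁ h₂).integrable_mul (memLp_norm_sub h₁ h₂)).const_mul _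
  have hnum := norm_integral_map_fst_sub_integral_map_snd_le (by fun_prop)
    (integrable_smul_self_of_integrable_norm_pow_four hωc hω₀ hω₁ h₁)
    (integrable_smul_self_of_integrable_norm_pow_four hωc hω₀ hω₁ h₂) hG
    fun p => norm_smul_self_sub_smul_self_le hL hω₀ hω₁ hωL p.1 p.2
  have hden := norm_integral_map_fst_sub_integral_map_snd_le hωc.stronglyMeasurable
    (hω _) (hω _) hG fun p => (hωL p.1 p.2).trans <| by
      simp only [G, ← mul_assoc]
      gcongr
      · linarith
      · nlinarith [norm_nonneg p.1, norm_nonneg p.2]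
  have hGint : ∫ p, G p ∂π ≤ (1 + L) * √(27 * (1 + 2 * K)) * √(∫ p, ‖p.1 - p.2‖ ^ 2 ∂π) := by
    rw [integral_const_mul, mul_assoc]
    gcongr
    exact (integral_one_add_norm_add_norm_sq_mul_norm_sub_le h₁ h₂).trans
      (mul_le_mul_of_nonneg_right (Real.sqrt_le_sqrt (by linarith)) (Real.sqrt_nonneg _))
  calc _ ≤ (1 / D + (1 + K) / D ^ 2) * ∫ p, G p ∂π :=
        norm_inv_smul_sub_inv_smul_le hD hD₁ hD₂
          ((norm_integral_smul_self_le hω₀ hω₁ h₂).trans (by linarith)) hnum hden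
    _ ≤ _ := by rw [mul_assoc _ ((1 + L) * _)]; gcongr

end Stability

theorem weighted_mean_stability {d : ℕ} (α Lf cu K : ℝ)
    (hα : 0 < α) (hLf : 0 < Lf) (hcu : 0 < cu) (hK : 0 ≤ K) :
    ∃ c₀ > (0 : ℝ), ∀ (f : EuclideanSpace ℝ (Fin d) → ℝ) (fbar : ℝ),
      IsGLB (Set.range f) fbar →
      (∀ x y : EuclideanSpace ℝ (Fin d), |f x - f y| ≤ Lf * (‖x‖ + ‖y‖) * ‖x - y‖) →
      (∀ x : EuclideanSpace ℝ (Fin d), f x - fbar ≤ cu * (1 + ‖x‖ ^ 2)) →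
      ∀ (μ μh : Measure (EuclideanSpace ℝ (Fin d))),
        IsProbabilityMeasure μ → IsProbabilityMeasure μh →
        Integrable (fun x => ‖x‖ ^ 4) μ → Integrable (fun x => ‖x‖ ^ 4) μh →
        (∫ x, ‖x‖ ^ 4 ∂μ) ≤ K → (∫ x, ‖x‖ ^ 4 ∂μh) ≤ K →
        ∀ π : Measure (EuclideanSpace ℝ (Fin d) × EuclideanSpace ℝ (Fin d)),
          IsProbabilityMeasure π →
          π.map Prod.fst = μ → π.map Prod.snd = μh →
          ‖((∫ x, Real.exp (-α * f x) ∂μ)⁻¹ • ∫ x, Real.exp (-α * f x) • x ∂μ) -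
            ((∫ x, Real.exp (-α * f x) ∂μh)⁻¹ • ∫ x, Real.exp (-α * f x) • x ∂μh)‖ ≤
            c₀ * Real.sqrt (∫ p, ‖p.1 - p.2‖ ^ 2 ∂π) := by
  set D := Real.exp (-(α * cu * (1 + √(2 * (K + 1))))) / 2
  refine ⟨(1 / D + (1 + K) / D ^ 2) * ((1 + α * Lf) * √(27 * (1 + 2 * K))), by positivity, ?_⟩
  rintro f fbar hglb hlip hub μ μh _ _ h₁ h₂ hK₁ hK₂ π _ rfl rfl
  set g := fun x => f x - fbar
  have hg₀ : ∀ x, 0 ≤ g x := fun x => sub_nonneg.mpr (hglb.1 ⟨x, rfl⟩)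
  have hgc : Continuous g :=
    (continuous_of_norm_sub_le_mul_norm_add_norm (φ := f) hlip).sub continuous_const
  have hω : (fun x => Real.exp (-α * f x)) =
      fun x => Real.exp (-α * fbar) * Real.exp (-α * g x) := by
    ext x; rw [← Real.exp_add]; simp only [g]; ring_nf
  change ‖weightedMean _ _ - weightedMean _ _‖ ≤ _
  rw [hω, weightedMean_const_mul _ _ (Real.exp_pos _).ne',
    weightedMean_const_mul _ _ (Real.exp_pos _).ne']
  refine norm_weightedMean_map_fst_sub_map_snd_le (by positivity) (by positivity) (by fun_prop)
    (fun x => (Real.exp_pos _).le) (fun x => Real.exp_le_one_iff.mpr (by nlinarith [hg₀ x]))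
    (abs_exp_neg_mul_comp_sub_exp_neg_mul_comp_le hα.le hg₀ fun x y => by
      simpa only [g, sub_sub_sub_cancel_right] using hlip x y) h₁ h₂ hK₁ hK₂
    (exp_div_two_le_integral_exp_neg_mul hα.le hcu.le hgc hg₀ hub h₁ hK₁)
    (exp_div_two_le_integral_exp_neg_mul hα.le hcu.le hgc hg₀ hub h₂ hK₂)
end

section
/- Let f : ℝ^d → ℝ be measurable and bounded below with infimum f* = f̲, satisfying the upper growth bound f(x) − f* ≤ c_u(1 + |x|²) for all x ∈ ℝ^d and the lower quadratic growth f(x) − f* ≥ c_l |x|² for all |x| ≥ M, with constants c_u, c_l, M > 0. Let α > 0 and let μ be a Borel probability measure on ℝ^d with finite second moment. Then the α-weighted measure η^α = ω μ / ∫ω dμ (where ω(x) = exp(−α f(x))) satisfies ∫ |x|² dη^α ≤ b₁ + b₂ ∫ |x|² dμ, with b₂ = 2 (c_u / c_l)(1 + 1/(α c_l M²)) and b₁ = M² + b₂. -/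
/-!
Write `w = exp (-α f)`. For any two points `x, y`, either `‖x‖² ≤ M² + 2 (c_u/c_l) (1 + ‖y‖²)`,
or `‖x‖ ≥ M` and `f x - f y ≥ c_l ‖x‖² - c_u (1 + ‖y‖²) ≥ c_l M² / 2`; in the second case
`w x ≤ 2 / (α c_l M²) · w y` (as `e^{-t} ≤ 1/t`), while the two growth bounds at `x` give
`‖x‖² ≤ (c_u/c_l) (1 + ‖x‖²)`. Either way `‖x‖² w x` is bounded by a sum of products `a x · b y`,
and integrating against `μ ⊗ μ` gives `∫ ‖x‖² w dμ ≤ (∫ w dμ) (M² + b₂ ∫ (1 + ‖x‖²) dμ)`.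
-/

open MeasureTheory Real

lemma Real.exp_neg_mul_le_of_le_sub {α a b t : ℝ} (hα : 0 < α) (ht : 0 < t) (h : t ≤ a - b) :
    exp (-α * a) ≤ (α * t)⁻¹ * exp (-α * b) := by
  have hαt : 0 < α * t := mul_pos hα ht
  calc exp (-α * a) = exp (-(α * (a - b))) * exp (-α * b) := by rw [← exp_add]; ring_nf
    _ ≤ exp (-(α * t)) * exp (-α * b) := by gcongr
    _ ≤ (α * t)⁻¹ * exp (-α * b) := by
        gcongr
        rw [exp_neg]
        exact inv_anti₀ hαt ((le_add_of_nonneg_right zero_le_one).trans (add_one_le_exp _))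

lemma integral_withDensity_ofReal_div {X : Type*} [MeasurableSpace X] {μ : Measure X}
    {ρ : X → ℝ} (hρ : Measurable ρ) (hρ0 : ∀ x, 0 ≤ ρ x) {Z : ℝ} (hZ : 0 ≤ Z) (g : X → ℝ) :
    ∫ x, g x ∂μ.withDensity (fun x => ENNReal.ofReal (ρ x / Z)) = (∫ x, g x * ρ x ∂μ) / Z := by
  rw [integral_withDensity_eq_integral_toReal_smul (hρ.div_const Z).ennreal_ofReal
    (ae_of_all _ fun _ => ENNReal.ofReal_lt_top), ← integral_div]
  simp only [ENNReal.toReal_ofReal (div_nonneg (hρ0 _) hZ), smul_eq_mul]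
  congr 1 with x
  ring

lemma integral_le_of_forall_le_mul_add_mul {X : Type*} [MeasurableSpace X] {μ : Measure X}
    [IsProbabilityMeasure μ] {F a b c d : X → ℝ} (hF : Integrable F μ) (ha : Integrable a μ)
    (hb : Integrable b μ) (hc : Integrable c μ) (hd : Integrable d μ)
    (h : ∀ x y, F x ≤ a x * b y + c x * d y) :
    ∫ x, F x ∂μ ≤ (∫ x, a x ∂μ) * (∫ y, b y ∂μ) + (∫ x, c x ∂μ) * ∫ y, d y ∂μ := by
  have hab := ha.mul_prod hb
  have hcd := hc.mul_prod hd
  calc ∫ x, F x ∂μ = ∫ z, F z.1 ∂μ.prod μ := by simp [integral_fun_fst]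
    _ ≤ ∫ z, (a z.1 * b z.2 + c z.1 * d z.2) ∂μ.prod μ :=
        integral_mono (hF.comp_fst μ) (hab.add hcd) fun z => h z.1 z.2
    _ = _ := by rw [integral_add hab hcd, integral_prod_mul, integral_prod_mul]

lemma sq_norm_mul_exp_neg_le {E : Type*} [SeminormedAddGroup E] {f : E → ℝ} {fstar cu cl M α : ℝ}
    (hcu : 0 < cu) (hcl : 0 < cl) (hM : 0 < M) (hα : 0 < α)
    (hup : ∀ x, f x - fstar ≤ cu * (1 + ‖x‖ ^ 2))
    (hlow : ∀ x, M ≤ ‖x‖ → cl * ‖x‖ ^ 2 ≤ f x - fstar) (x y : E) :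
    ‖x‖ ^ 2 * exp (-α * f x) ≤
      exp (-α * f x) * (M ^ 2 + 2 * (cu / cl) * (1 + ‖y‖ ^ 2)) +
        2 * (cu / cl) / (α * cl * M ^ 2) * (1 + ‖x‖ ^ 2) * exp (-α * f y) := by
  by_cases hfar : M ≤ ‖x‖ ∧ 2 * cu * (1 + ‖y‖ ^ 2) < cl * ‖x‖ ^ 2
  · obtain ⟨hxM, hxy⟩ := hfar
    have hM2 : M ^ 2 ≤ ‖x‖ ^ 2 := pow_le_pow_left₀ hM.le hxM 2
    have hx : ‖x‖ ^ 2 ≤ cu / cl * (1 + ‖x‖ ^ 2) := by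
      rw [div_mul_eq_mul_div, le_div_iff₀ hcl]
      linarith [hlow x hxM, hup x]
    have hw : exp (-α * f x) ≤ (α * (cl * M ^ 2 / 2))⁻¹ * exp (-α * f y) :=
      exp_neg_mul_le_of_le_sub hα (by positivity) (by nlinarith [hlow x hxM, hup y])
    calc ‖x‖ ^ 2 * exp (-α * f x)
        ≤ cu / cl * (1 + ‖x‖ ^ 2) * ((α * (cl * M ^ 2 / 2))⁻¹ * exp (-α * f y)) := by gcongr
      _ = 2 * (cu / cl) / (α * cl * M ^ 2) * (1 + ‖x‖ ^ 2) * exp (-α * f y) := by field_simp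
      _ ≤ _ := le_add_of_nonneg_left (by positivity)
  · have hx : ‖x‖ ^ 2 ≤ M ^ 2 + 2 * (cu / cl) * (1 + ‖y‖ ^ 2) := by
      rcases lt_or_ge ‖x‖ M with hxM | hxM
      · have : ‖x‖ ^ 2 ≤ M ^ 2 := pow_le_pow_left₀ (norm_nonneg x) hxM.le 2
        have : 0 ≤ 2 * (cu / cl) * (1 + ‖y‖ ^ 2) := by positivity
        linarith
      · have : ‖x‖ ^ 2 ≤ 2 * (cu / cl) * (1 + ‖y‖ ^ 2) := by
          rw [mul_div_assoc', div_mul_eq_mul_div, le_div_iff₀ hcl]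
          linarith [not_lt.mp fun h => hfar ⟨hxM, h⟩]
        linarith [sq_nonneg M]
    calc ‖x‖ ^ 2 * exp (-α * f x)
        ≤ exp (-α * f x) * (M ^ 2 + 2 * (cu / cl) * (1 + ‖y‖ ^ 2)) := by rw [mul_comm]; gcongr
      _ ≤ _ := le_add_of_nonneg_right (by positivity)

theorem weighted_measure_second_moment {d : ℕ} (f : EuclideanSpace ℝ (Fin d) → ℝ)
    (hf : Measurable f) (fstar : ℝ) (hglb : IsGLB (Set.range f) fstar)
    (cu cl M : ℝ) (hcu : 0 < cu) (hcl : 0 < cl) (hM : 0 < M)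
    (hgrow_up : ∀ x : EuclideanSpace ℝ (Fin d), f x - fstar ≤ cu * (1 + ‖x‖ ^ 2))
    (hgrow_low : ∀ x : EuclideanSpace ℝ (Fin d), M ≤ ‖x‖ → cl * ‖x‖ ^ 2 ≤ f x - fstar)
    (α : ℝ) (hα : 0 < α)
    (μ : Measure (EuclideanSpace ℝ (Fin d))) [IsProbabilityMeasure μ]
    (hint : Integrable (fun x => ‖x‖ ^ 2) μ) :
    (∫ x, ‖x‖ ^ 2 ∂(μ.withDensity (fun x =>
        ENNReal.ofReal (Real.exp (-α * f x) / ∫ y, Real.exp (-α * f y) ∂μ)))) ≤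
      (M ^ 2 + 2 * (cu / cl) * (1 + 1 / (α * cl * M ^ 2))) +
        2 * (cu / cl) * (1 + 1 / (α * cl * M ^ 2)) * ∫ x, ‖x‖ ^ 2 ∂μ := by
  have hw_meas : Measurable fun x => exp (-α * f x) := (hf.const_mul _).exp
  have hw_le : ∀ x, ‖exp (-α * f x)‖ ≤ exp (-α * fstar) := fun x => by
    rw [norm_of_nonneg (exp_pos _).le, exp_le_exp]
    nlinarith [hglb.1 ⟨x, rfl⟩]
  have hw_int : Integrable (fun x => exp (-α * f x)) μ :=
    .of_bound hw_meas.aestronglyMeasurable _ (ae_of_all _ hw_le)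
  have hZ := integral_exp_pos hw_int
  have hint_one_add : Integrable (fun x : EuclideanSpace ℝ (Fin d) => 1 + ‖x‖ ^ 2) μ :=
    (integrable_const 1).add hint
  rw [integral_withDensity_ofReal_div hw_meas (fun x => (exp_pos _).le) hZ.le, div_le_iff₀ hZ]
  have hmoment := integral_le_of_forall_le_mul_add_mul
    (b := fun y => M ^ 2 + 2 * (cu / cl) * (1 + ‖y‖ ^ 2))
    (hint.mul_bdd hw_meas.aestronglyMeasurable (ae_of_all _ hw_le)) hw_int
    ((integrable_const _).add (hint_one_add.const_mul _)) (hint_one_add.const_mul _) hw_int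
    (sq_norm_mul_exp_neg_le hcu hcl hM hα hgrow_up hgrow_low)
  have hV : ∫ x, (1 + ‖x‖ ^ 2) ∂μ = 1 + ∫ x, ‖x‖ ^ 2 ∂μ := by
    simp [integral_add (integrable_const _) hint]
  rw [integral_add (integrable_const _) (hint_one_add.const_mul _), integral_const_mul,
    integral_const_mul, hV] at hmoment
  simp only [integral_const, probReal_univ, one_smul] at hmoment
  exact hmoment.trans_eq (by ring)
end

section
/- Let f : ℝ^d → ℝ be measurable and bounded below with infimum f*, let α > 0, and let μ be a Borel probability measure on ℝ^d. Let η^α be the α-weighted measure of μ. Then for all k, ℓ > 0 with μ({f − f* < ℓ}) > 0, one has η^α({x : f(x) − f* ≥ k}) ≤ exp(−α(k − ℓ)) · μ({x : f(x) − f* ≥ k}) / μ({x : f(x) − f* < ℓ}). -/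
/-!
On `{f - f* ≥ k}` the weight `exp (-α f)` is at most `exp (-α (f* + k))`, while on
`{f - f* < ℓ}` it is at least `exp (-α (f* + ℓ))`; the latter bounds the normalizing constant
from below by `exp (-α (f* + ℓ)) μ {f - f* < ℓ}`.
-/

open MeasureTheory

section WeightedMeasure

variable {X : Type*} [MeasurableSpace X] {μ : Measure X} {w : X → ℝ}

theorem integrable_exp_neg_mul_of_le [IsFiniteMeasure μ] {f : X → ℝ} (hf : Measurable f)
    {α c : ℝ} (hα : 0 ≤ α) (hc : ∀ x, c ≤ f x) :
    Integrable (fun x => Real.exp (-α * f x)) μ := by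
  refine Integrable.of_bound (hf.const_mul (-α)).exp.aestronglyMeasurable
    (Real.exp (-α * c)) (ae_of_all _ fun x => ?_)
  rw [Real.norm_of_nonneg (Real.exp_pos _).le]
  exact Real.exp_le_exp.2 (by nlinarith [hc x])

theorem measureReal_withDensity_ofReal_div_integral [SFinite μ] (hw : Integrable w μ)
    (hw0 : 0 ≤ w) (s : Set X) :
    (μ.withDensity (fun x => ENNReal.ofReal (w x / ∫ y, w y ∂μ)) s).toReal =
      (∫ x in s, w x ∂μ) / ∫ x, w x ∂μ := by
  have hdensity0 : ∀ x, 0 ≤ w x / ∫ y, w y ∂μ := fun x =>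
    div_nonneg (hw0 x) (integral_nonneg hw0)
  rw [withDensity_apply', ← ofReal_integral_eq_lintegral_ofReal (hw.div_const _).integrableOn
      (ae_of_all _ hdensity0), ENNReal.toReal_ofReal (integral_nonneg hdensity0), integral_div]

theorem setIntegral_div_integral_le [IsFiniteMeasure μ] (hw : Integrable w μ) (hw0 : 0 ≤ w)
    {s t : Set X} (hs : MeasurableSet s) (ht : MeasurableSet t) {a b : ℝ}
    (hs_le : ∀ x ∈ s, w x ≤ a) (ht_ge : ∀ x ∈ t, b ≤ w x) (hb : 0 < b) (hμt : μ t ≠ 0) :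
    (∫ x in s, w x ∂μ) / ∫ x, w x ∂μ ≤ a * μ.real s / (b * μ.real t) := by
  have hnum : ∫ x in s, w x ∂μ ≤ a * μ.real s := by
    rw [mul_comm, ← smul_eq_mul, ← setIntegral_const]
    exact setIntegral_mono_on hw.integrableOn (integrableOn_const (measure_ne_top μ s)) hs hs_le
  have hden : b * μ.real t ≤ ∫ x, w x ∂μ :=
    (setIntegral_ge_of_const_le_real ht (measure_ne_top μ t) ht_ge hw.integrableOn).trans
      (setIntegral_le_integral hw (ae_of_all _ hw0))
  have hμt_pos : 0 < μ.real t := ENNReal.toReal_pos hμt (measure_ne_top μ t)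
  exact div_le_div₀ ((setIntegral_nonneg hs fun x _ => hw0 x).trans hnum) hnum
    (by positivity) hden

end WeightedMeasure

theorem weighted_measure_tail_estimate_general {d : ℕ} (f : EuclideanSpace ℝ (Fin d) → ℝ)
    (hf : Measurable f) (fstar : ℝ) (hglb : IsGLB (Set.range f) fstar)
    (α : ℝ) (hα : 0 < α)
    (μ : Measure (EuclideanSpace ℝ (Fin d))) [IsProbabilityMeasure μ]
    (k ℓ : ℝ)
    (hpos : 0 < μ {x | f x - fstar < ℓ}) :
    ((μ.withDensity (fun x =>
        ENNReal.ofReal (Real.exp (-α * f x) / ∫ y, Real.exp (-α * f y) ∂μ)))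
          {x | k ≤ f x - fstar}).toReal ≤
      Real.exp (-α * (k - ℓ)) * (μ {x | k ≤ f x - fstar}).toReal /
        (μ {x | f x - fstar < ℓ}).toReal := by
  have hw := integrable_exp_neg_mul_of_le (μ := μ) hf hα.le fun x => hglb.1 ⟨x, rfl⟩
  rw [measureReal_withDensity_ofReal_div_integral hw fun x => (Real.exp_pos _).le]
  calc _ ≤ Real.exp (-α * (fstar + k)) * μ.real {x | k ≤ f x - fstar} /
        (Real.exp (-α * (fstar + ℓ)) * μ.real {x | f x - fstar < ℓ}) :=
        setIntegral_div_integral_le hw (fun x => (Real.exp_pos _).le)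
          (measurableSet_le measurable_const (hf.sub measurable_const))
          (measurableSet_lt (hf.sub measurable_const) measurable_const)
          (fun x (hx : k ≤ f x - fstar) => Real.exp_le_exp.2 (by nlinarith))
          (fun x (hx : f x - fstar < ℓ) => Real.exp_le_exp.2 (by nlinarith)) (Real.exp_pos _)
          hpos.ne'
    _ = _ := by
        rw [mul_div_mul_comm, ← Real.exp_sub, mul_div_assoc]
        congr 2
        ring

theorem weighted_measure_tail_estimate {d : ℕ} (f : EuclideanSpace ℝ (Fin d) → ℝ)
    (hf : Measurable f) (fstar : ℝ) (hglb : IsGLB (Set.range f) fstar)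
    (α : ℝ) (hα : 0 < α)
    (μ : Measure (EuclideanSpace ℝ (Fin d))) [IsProbabilityMeasure μ]
    (k ℓ : ℝ) (hk : 0 < k) (hℓ : 0 < ℓ)
    (hpos : 0 < μ {x | f x - fstar < ℓ}) :
    ((μ.withDensity (fun x =>
        ENNReal.ofReal (Real.exp (-α * f x) / ∫ y, Real.exp (-α * f y) ∂μ)))
          {x | k ≤ f x - fstar}).toReal ≤
      Real.exp (-α * (k - ℓ)) * (μ {x | k ≤ f x - fstar}).toReal /
        (μ {x | f x - fstar < ℓ}).toReal :=
  weighted_measure_tail_estimate_general f hf fstar hglb α hα μ k ℓ hpos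
end

section
/- Let f ∈ C²(ℝ^d) be bounded below with infimum f̲, and suppose ‖∇²f‖_∞ ≤ c_f (the Hessian is bounded in operator norm by c_f) and Δf(x) ≤ c₀ + c₁|∇f(x)|² for all x ∈ ℝ^d, with constants c_f, c₀, c₁ > 0. Let λ, σ > 0, let α ≥ c₁, and let ρ be a Borel probability measure on ℝ^d with finite second moment; set m = m_f[ρ] and ω(x) = exp(−α f(x)). Then ∫ [ α λ (∇f(x) − ∇f(m)) · (x − m) + (σ²/2)( α² |∇f(x)|² − α Δf(x) ) |x − m|² ] ω(x) dρ(x) ≥ −α exp(−α f̲) ( c₀ σ²/2 + λ c_f ) ∫ |x − m|² dρ(x). -/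
/-!
The bound holds pointwise, before integrating: the Hessian bound makes `∇f` `c_f`-Lipschitz, so
`⟪∇f x - ∇f m, x - m⟫ ≥ -c_f |x - m|²`; the Laplacian bound together with `α ≥ c₁` gives
`α² |∇f x|² - α Δf x ≥ -α c₀`; and `ω ≤ exp (-α f̲)`. Integrating against `ρ`, for which
`|x - m|²` is integrable by the second-moment assumption, yields the claim. If the integrand on the
left is not integrable, its Bochner integral is `0` and the claim holds because the right side is
nonpositive.
-/

open MeasureTheory
open scoped RealInnerProductSpace

theorem integrable_norm_sub_sq {E : Type*} [NormedAddCommGroup E] [MeasurableSpace E]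
    [BorelSpace E] [SecondCountableTopology E] {μ : Measure E} [IsFiniteMeasure μ]
    (h : Integrable (fun x => ‖x‖ ^ 2) μ) (m : E) : Integrable (fun x => ‖x - m‖ ^ 2) μ := by
  have hid : MemLp id 2 μ := (memLp_two_iff_integrable_sq_norm aestronglyMeasurable_id).2 h
  exact (memLp_two_iff_integrable_sq_norm (by fun_prop)).1 (hid.sub (memLp_const m))

section InnerProductSpace

variable {F : Type*} [NormedAddCommGroup F] [InnerProductSpace ℝ F]

theorem ContDiff.differentiable_gradient [CompleteSpace F] {f : F → ℝ} (hf : ContDiff ℝ 2 f) :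
    Differentiable ℝ (gradient f) :=
  ((InnerProductSpace.toDual ℝ F).symm.contDiff.comp
    (hf.fderiv_right (m := 1) le_rfl)).differentiable one_ne_zero

theorem norm_gradient_sub_le [CompleteSpace F] {f : F → ℝ} (hf : ContDiff ℝ 2 f) {C : ℝ}
    (hC : ∀ x, ‖fderiv ℝ (gradient f) x‖ ≤ C) (x y : F) :
    ‖gradient f x - gradient f y‖ ≤ C * ‖x - y‖ :=
  convex_univ.norm_image_sub_le_of_norm_fderiv_le (fun z _ => hf.differentiable_gradient z)
    (fun z _ => hC z) trivial trivial

theorem neg_mul_norm_sq_le_inner_sub {g : F → F} {C : ℝ}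
    (hg : ∀ x y, ‖g x - g y‖ ≤ C * ‖x - y‖) (x y : F) :
    -(C * ‖x - y‖ ^ 2) ≤ ⟪g x - g y, x - y⟫ := by
  refine neg_le_of_abs_le ((abs_real_inner_le_norm _ _).trans ?_)
  rw [sq, ← mul_assoc]
  exact mul_le_mul_of_nonneg_right (hg x y) (norm_nonneg _)

end InnerProductSpace

theorem mul_integral_le_integral_of_mul_le {α : Type*} [MeasurableSpace α] {μ : Measure α}
    {g F : α → ℝ} {c : ℝ} (hc : c ≤ 0) (hg : Integrable g μ) (hg0 : ∀ x, 0 ≤ g x)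
    (hle : ∀ x, c * g x ≤ F x) : c * ∫ x, g x ∂μ ≤ ∫ x, F x ∂μ := by
  by_cases hF : Integrable F μ
  · rw [← integral_const_mul]
    exact integral_mono (hg.const_mul c) hF hle
  · rw [integral_undef hF]
    exact mul_nonpos_of_nonpos_of_nonneg hc (integral_nonneg hg0)

theorem neg_mul_sq_le_drift_diffusion_integrand {cf c₀ c₁ lam σ α r n L ip ω W : ℝ}
    (hcf : 0 ≤ cf) (hc₀ : 0 ≤ c₀) (hα₀ : 0 ≤ α) (hα : c₁ ≤ α) (hlam : 0 ≤ lam)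
    (hω₀ : 0 ≤ ω) (hωW : ω ≤ W) (hip : -(cf * r ^ 2) ≤ ip) (hL : L ≤ c₀ + c₁ * n ^ 2) :
    -(α * W * (c₀ * σ ^ 2 / 2 + lam * cf)) * r ^ 2 ≤
      (α * lam * ip + σ ^ 2 / 2 * (α ^ 2 * n ^ 2 - α * L) * r ^ 2) * ω := by
  have hlap : -(α * c₀) ≤ α ^ 2 * n ^ 2 - α * L := by
    nlinarith [mul_le_mul_of_nonneg_left hL hα₀,
      mul_nonneg (mul_nonneg hα₀ (sub_nonneg.2 hα)) (sq_nonneg n)]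
  have hK : 0 ≤ α * (c₀ * σ ^ 2 / 2 + lam * cf) * r ^ 2 := by positivity
  have hbracket : -(α * (c₀ * σ ^ 2 / 2 + lam * cf) * r ^ 2) ≤
      α * lam * ip + σ ^ 2 / 2 * (α ^ 2 * n ^ 2 - α * L) * r ^ 2 := by
    nlinarith [mul_le_mul_of_nonneg_left hip (mul_nonneg hα₀ hlam),
      mul_le_mul_of_nonneg_right hlap (mul_nonneg (by positivity : (0 : ℝ) ≤ σ ^ 2 / 2)
        (sq_nonneg r))]
  calc -(α * W * (c₀ * σ ^ 2 / 2 + lam * cf)) * r ^ 2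
      = -(α * (c₀ * σ ^ 2 / 2 + lam * cf) * r ^ 2) * W := by ring
    _ ≤ -(α * (c₀ * σ ^ 2 / 2 + lam * cf) * r ^ 2) * ω :=
      mul_le_mul_of_nonpos_left hωW (neg_nonpos.2 hK)
    _ ≤ _ := mul_le_mul_of_nonneg_right hbracket hω₀

theorem weight_mass_derivative_lower_bound_general {d : ℕ} (f : EuclideanSpace ℝ (Fin d) → ℝ)
    (hf : ContDiff ℝ 2 f) (fbar : ℝ) (hglb : IsGLB (Set.range f) fbar)
    (cf c₀ c₁ : ℝ) (hc₀ : 0 < c₀) (hc₁ : 0 < c₁)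
    (hHess : ∀ x : EuclideanSpace ℝ (Fin d), ‖fderiv ℝ (gradient f) x‖ ≤ cf)
    (hLap : ∀ x : EuclideanSpace ℝ (Fin d),
      (∑ i, ⟪fderiv ℝ (gradient f) x (EuclideanSpace.single i (1 : ℝ)),
        EuclideanSpace.single i (1 : ℝ)⟫) ≤ c₀ + c₁ * ‖gradient f x‖ ^ 2)
    (lam σ α : ℝ) (hlam : 0 < lam) (hα : c₁ ≤ α)
    (ρ : Measure (EuclideanSpace ℝ (Fin d))) [IsProbabilityMeasure ρ]
    (hint : Integrable (fun x => ‖x‖ ^ 2) ρ)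
    (m : EuclideanSpace ℝ (Fin d)) :
    (∫ x, (α * lam * ⟪gradient f x - gradient f m, x - m⟫ +
        σ ^ 2 / 2 * (α ^ 2 * ‖gradient f x‖ ^ 2 -
          α * ∑ i, ⟪fderiv ℝ (gradient f) x (EuclideanSpace.single i (1 : ℝ)),
            EuclideanSpace.single i (1 : ℝ)⟫) * ‖x - m‖ ^ 2) *
        Real.exp (-α * f x) ∂ρ) ≥
      -(α * Real.exp (-α * fbar) * (c₀ * σ ^ 2 / 2 + lam * cf)) *
        ∫ x, ‖x - m‖ ^ 2 ∂ρ := by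
  have hα₀ : 0 ≤ α := hc₁.le.trans hα
  have hcf : 0 ≤ cf := (norm_nonneg _).trans (hHess 0)
  have hweight : ∀ x, Real.exp (-α * f x) ≤ Real.exp (-α * fbar) := fun x =>
    Real.exp_le_exp.2 (mul_le_mul_of_nonpos_left (hglb.1 ⟨x, rfl⟩) (neg_nonpos.2 hα₀))
  refine mul_integral_le_integral_of_mul_le (neg_nonpos.2 (by positivity))
    (integrable_norm_sub_sq hint m) (fun x => by positivity) fun x => ?_
  exact neg_mul_sq_le_drift_diffusion_integrand hcf hc₀.le hα₀ hα hlam.le (Real.exp_pos _).le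
    (hweight x) (neg_mul_norm_sq_le_inner_sub (norm_gradient_sub_le hf hHess) x m) (hLap x)

theorem weight_mass_derivative_lower_bound {d : ℕ} (f : EuclideanSpace ℝ (Fin d) → ℝ)
    (hf : ContDiff ℝ 2 f) (fbar : ℝ) (hglb : IsGLB (Set.range f) fbar)
    (cf c₀ c₁ : ℝ) (hcf : 0 < cf) (hc₀ : 0 < c₀) (hc₁ : 0 < c₁)
    (hHess : ∀ x : EuclideanSpace ℝ (Fin d), ‖fderiv ℝ (gradient f) x‖ ≤ cf)
    (hLap : ∀ x : EuclideanSpace ℝ (Fin d),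
      (∑ i, ⟪fderiv ℝ (gradient f) x (EuclideanSpace.single i (1 : ℝ)),
        EuclideanSpace.single i (1 : ℝ)⟫) ≤ c₀ + c₁ * ‖gradient f x‖ ^ 2)
    (lam σ α : ℝ) (hlam : 0 < lam) (hσ : 0 < σ) (hα : c₁ ≤ α)
    (ρ : Measure (EuclideanSpace ℝ (Fin d))) [IsProbabilityMeasure ρ]
    (hint : Integrable (fun x => ‖x‖ ^ 2) ρ)
    (m : EuclideanSpace ℝ (Fin d))
    (hm : m = (∫ x, Real.exp (-α * f x) ∂ρ)⁻¹ • ∫ x, Real.exp (-α * f x) • x ∂ρ) :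
    (∫ x, (α * lam * ⟪gradient f x - gradient f m, x - m⟫ +
        σ ^ 2 / 2 * (α ^ 2 * ‖gradient f x‖ ^ 2 -
          α * ∑ i, ⟪fderiv ℝ (gradient f) x (EuclideanSpace.single i (1 : ℝ)),
            EuclideanSpace.single i (1 : ℝ)⟫) * ‖x - m‖ ^ 2) *
        Real.exp (-α * f x) ∂ρ) ≥
      -(α * Real.exp (-α * fbar) * (c₀ * σ ^ 2 / 2 + lam * cf)) *
        ∫ x, ‖x - m‖ ^ 2 ∂ρ :=
  weight_mass_derivative_lower_bound_general f hf fbar hglb cf c₀ c₁ hc₀ hc₁ hHess hLap lam σ α hlam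
    hα ρ hint m
end

section
/- Let λ, σ > 0, d ∈ ℕ, α > 0 and f̲ ∈ ℝ. Let V, W : [0,∞) → ℝ be continuously differentiable with V(t) ≥ 0 for all t, V(0) = K > 0, W(0) = b₀² with b₀ > 0, and suppose: (i) W'(t) ≥ −b₁ V(t) for all t ≥ 0, where 0 ≤ b₁ < 3/4; (ii) for every t ≥ 0 with W(t) > 0, V'(t) ≤ −(2λ − d σ² exp(−α f̲)/√(W(t))) V(t); and (iii) 2λ b₀² − K − 2 d σ² b₀ exp(−α f̲) ≥ 0. Then for all t ≥ 0, V(t) ≤ K exp(−q t), where q = 2(λ − (d σ²/b₀) exp(−α f̲)); moreover q ≥ K/b₀². -/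
/-! Bootstrap on the threshold `W > b₀² / 4`. As long as it holds, `√W > b₀ / 2`, so the decay
rate of `V` in (ii) is at least `q` and Grönwall gives `V t ≤ K e^{-q t}`. Feeding this into
`W' ≥ -b₁ V` shows that `W` loses at most `b₁ K / q ≤ b₁ b₀² < 3 b₀² / 4` of its initial value
`b₀²`, so the threshold still holds at the first time it could fail; by continuity it never
fails. The bound `K / q ≤ b₀²` is the parameter condition (iii). -/

open Set Real

lemma le_mul_exp_of_deriv_le_mul {V : ℝ → ℝ} {k a b : ℝ} (hV : Differentiable ℝ V)
    (h : ∀ x ∈ Ico a b, deriv V x ≤ k * V x) :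
    ∀ x ∈ Icc a b, V x ≤ V a * exp (k * (x - a)) := by
  intro x hx
  have := le_gronwallBound_of_liminf_deriv_right_le (f' := deriv V) (ε := 0)
    hV.continuous.continuousOn
    (fun x _ r hr ↦ (hV x).hasDerivAt.hasDerivWithinAt.liminf_right_slope_le hr) le_rfl
    (by simpa using h) x hx
  rwa [gronwallBound_ε0] at this

lemma sub_div_le_of_neg_mul_exp_le_deriv {W : ℝ → ℝ} {C q a b : ℝ} (hq : 0 < q) (hC : 0 ≤ C)
    (hW : Differentiable ℝ W) (h : ∀ x ∈ Ioo a b, -C * exp (-q * (x - a)) ≤ deriv W x) :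
    ∀ x ∈ Icc a b, W a - C / q ≤ W x := by
  set g : ℝ → ℝ := fun u ↦ W u - C / q * exp (-q * (u - a))
  have hg : ∀ x, HasDerivAt g (deriv W x + C * exp (-q * (x - a))) x := by
    intro x
    have hlin : HasDerivAt (fun u ↦ -q * (u - a)) (-q) x := by
      simpa using ((hasDerivAt_id x).sub_const a).const_mul (-q)
    exact ((hW x).hasDerivAt.sub (hlin.exp.const_mul (C / q))).congr_deriv (by field_simp; ring)
  have hmono : MonotoneOn g (Icc a b) := by
    refine monotoneOn_of_deriv_nonneg (convex_Icc a b)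
      (continuous_iff_continuousAt.2 fun x ↦ (hg x).continuousAt).continuousOn
      (fun x _ ↦ (hg x).differentiableAt.differentiableWithinAt) fun x hx ↦ ?_
    rw [interior_Icc] at hx
    rw [(hg x).deriv]
    linarith [h x hx]
  intro x hx
  have hgx := hmono (left_mem_Icc.2 (hx.1.trans hx.2)) hx hx.1
  have hexp : 0 ≤ C / q * exp (-q * (x - a)) := by positivity
  simp only [g, sub_self, mul_zero, exp_zero, mul_one] at hgx
  linarith

lemma ContinuousOn.lt_of_forall_Ico_lt_imp_lt {W : ℝ → ℝ} {a m : ℝ}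
    (hW : ContinuousOn W (Ici a)) (hstep : ∀ t ≥ a, (∀ s ∈ Ico a t, m < W s) → m < W t) :
    ∀ t ≥ a, m < W t := by
  by_contra! hbad
  set A : Set ℝ := Ici a ∩ W ⁻¹' Iic m
  have hAclosed : IsClosed A := hW.preimage_isClosed_of_isClosed isClosed_Ici isClosed_Iic
  have hAbdd : BddBelow A := ⟨a, fun _ hx ↦ hx.1⟩
  obtain ⟨ha, hWm⟩ : sInf A ∈ A := hAclosed.csInf_mem hbad hAbdd
  refine (hstep _ ha fun s hs ↦ ?_).not_ge hWm
  by_contra! hWs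
  exact (csInf_le hAbdd ⟨hs.1, hWs⟩).not_gt hs.2

lemma neg_sub_div_sqrt_mul_le {l c b w v : ℝ} (hc : 0 ≤ c) (hb : 0 < b) (hw : b ^ 2 / 4 < w)
    (hv : 0 ≤ v) : -(l - c / √w) * v ≤ -(l - 2 * c / b) * v := by
  have hsqrt : b / 2 ≤ √w := by
    rw [show b / 2 = √((b / 2) ^ 2) by rw [sqrt_sq (by positivity)]]
    exact sqrt_le_sqrt (by linarith)
  have hdiv : c / √w ≤ 2 * c / b := by
    rw [div_le_div_iff₀ (by linarith) hb]
    nlinarith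
  nlinarith [mul_le_mul_of_nonneg_right hdiv hv]

theorem variance_decay_bootstrap_general (lam σ α fbar : ℝ) (d : ℕ)
    (V W : ℝ → ℝ) (hV : ContDiff ℝ 1 V) (hW : ContDiff ℝ 1 W)
    (K b₀ b₁ : ℝ) (hK : 0 < K) (hb₀ : 0 < b₀)
    (hVnonneg : ∀ t ≥ (0 : ℝ), 0 ≤ V t)
    (hV0 : V 0 = K) (hW0 : W 0 = b₀ ^ 2)
    (hb₁nonneg : 0 ≤ b₁) (hb₁ : b₁ < 3 / 4)
    (hWder : ∀ t ≥ (0 : ℝ), deriv W t ≥ -b₁ * V t)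
    (hVder : ∀ t ≥ (0 : ℝ), 0 < W t →
      deriv V t ≤ -(2 * lam - d * σ ^ 2 * Real.exp (-α * fbar) / Real.sqrt (W t)) * V t)
    (hparam : 2 * lam * b₀ ^ 2 - K - 2 * d * σ ^ 2 * b₀ * Real.exp (-α * fbar) ≥ 0) :
    (∀ t ≥ (0 : ℝ),
        V t ≤ K * Real.exp (-(2 * (lam - d * σ ^ 2 / b₀ * Real.exp (-α * fbar))) * t)) ∧
      2 * (lam - d * σ ^ 2 / b₀ * Real.exp (-α * fbar)) ≥ K / b₀ ^ 2 := by
  set c := d * σ ^ 2 * exp (-α * fbar) with hc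
  set q := 2 * (lam - d * σ ^ 2 / b₀ * exp (-α * fbar)) with hq_def
  have hqc : q = 2 * lam - 2 * c / b₀ := by
    rw [hq_def, hc]
    field_simp
  have hqK : K / b₀ ^ 2 ≤ q := by
    rw [div_le_iff₀ (by positivity), hqc]
    field_simp
    linarith
  have hq : 0 < q := lt_of_lt_of_le (by positivity) hqK
  have hWd : Differentiable ℝ W := hW.differentiable one_ne_zero
  have hdecay : ∀ T ≥ 0, (∀ s ∈ Ico 0 T, b₀ ^ 2 / 4 < W s) →
      ∀ t ∈ Icc 0 T, V t ≤ K * exp (-q * t) := by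
    intro T _ hWT
    have hrate : ∀ x ∈ Ico 0 T, deriv V x ≤ -q * V x := fun x hx ↦ by
      rw [hqc]
      exact (hVder x hx.1 (lt_trans (by positivity) (hWT x hx))).trans
        (neg_sub_div_sqrt_mul_le (by positivity) hb₀ (hWT x hx) (hVnonneg x hx.1))
    simpa [hV0] using le_mul_exp_of_deriv_le_mul (hV.differentiable one_ne_zero) hrate
  have hWlarge : ∀ t ≥ 0, b₀ ^ 2 / 4 < W t := by
    refine hWd.continuous.continuousOn.lt_of_forall_Ico_lt_imp_lt fun T hT hWT ↦ ?_
    have hWlow := sub_div_le_of_neg_mul_exp_le_deriv hq (mul_nonneg hb₁nonneg hK.le) hWd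
      (fun x hx ↦ by
        rw [sub_zero]
        nlinarith [hWder x hx.1.le,
          mul_le_mul_of_nonneg_left (hdecay T hT hWT x (Ioo_subset_Icc_self hx)) hb₁nonneg])
      T ⟨hT, le_rfl⟩
    have hKq : b₁ * K / q ≤ b₁ * b₀ ^ 2 := by
      rw [div_le_iff₀ hq]
      nlinarith [(div_le_iff₀ (by positivity : (0 : ℝ) < b₀ ^ 2)).1 hqK]
    nlinarith [mul_pos (sub_pos.2 hb₁) (pow_pos hb₀ 2)]
  exact ⟨fun t ht ↦ hdecay t ht (fun s hs ↦ hWlarge s hs.1) t ⟨ht, le_rfl⟩, hqK⟩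

theorem variance_decay_bootstrap (lam σ α fbar : ℝ) (d : ℕ)
    (hlam : 0 < lam) (hσ : 0 < σ)
    (V W : ℝ → ℝ) (hV : ContDiff ℝ 1 V) (hW : ContDiff ℝ 1 W)
    (K b₀ b₁ : ℝ) (hK : 0 < K) (hb₀ : 0 < b₀)
    (hVnonneg : ∀ t ≥ (0 : ℝ), 0 ≤ V t)
    (hV0 : V 0 = K) (hW0 : W 0 = b₀ ^ 2)
    (hb₁nonneg : 0 ≤ b₁) (hb₁ : b₁ < 3 / 4)
    (hWder : ∀ t ≥ (0 : ℝ), deriv W t ≥ -b₁ * V t)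
    (hVder : ∀ t ≥ (0 : ℝ), 0 < W t →
      deriv V t ≤ -(2 * lam - d * σ ^ 2 * Real.exp (-α * fbar) / Real.sqrt (W t)) * V t)
    (hparam : 2 * lam * b₀ ^ 2 - K - 2 * d * σ ^ 2 * b₀ * Real.exp (-α * fbar) ≥ 0) :
    (∀ t ≥ (0 : ℝ),
        V t ≤ K * Real.exp (-(2 * (lam - d * σ ^ 2 / b₀ * Real.exp (-α * fbar))) * t)) ∧
      2 * (lam - d * σ ^ 2 / b₀ * Real.exp (-α * fbar)) ≥ K / b₀ ^ 2 :=
  variance_decay_bootstrap_general lam σ α fbar d V W hV hW K b₀ b₁ hK hb₀ hVnonneg hV0 hW0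
    hb₁nonneg hb₁ hWder hVder hparam
end
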